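/- arXiv:1506.02196 — 4 statements merged into one kernel-verified Lean document; each statement's English description precedes it below -/
import Mathlib

section
/- Let Φ: ℝ^d → ℝ be a differentiable convex function whose gradient ∇Φ is Lipschitz-continuous with constant β > 0, let C ⊆ ℝ^d be a nonempty closed convex set, and suppose that Φ attains a minimum over C. Let w₀ ∈ ℝ^d, let (γₙ) be a sequence in (0,∞) with infₙ γₙ > 0 and supₙ γₙ < 2/β, and let (aₙ) be a sequence in ℝ^d with Σₙ ‖aₙ‖ < ∞. Define the sequence (wₙ) by w_{n+1} = P_C(wₙ − γₙ ∇Φ(wₙ)) + aₙ. Then (wₙ) converges to a point w* ∈ C such that Φ(w*) = inf_{w ∈ C} Φ(w). -/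
open Filter Topology

section helpers

variable {E : Type*} [NormedAddCommGroup E] [InnerProductSpace ℝ E]

local notation "⟪" x ", " y "⟫" => @inner ℝ _ _ x y

private lemma pg_le_of_sq_le_sq {x y : ℝ} (hy : 0 ≤ y) (hx : 0 ≤ x) (h : x ^ 2 ≤ y ^ 2) :
    x ≤ y := by nlinarith

/-- Variational characterization of a nearest point on a convex set. -/
private lemma pg_proj_inner_le_zero {C : Set E} (hC : Convex ℝ C) {x p : E}
    (hp : p ∈ C) (hnear : ∀ q ∈ C, ‖x - p‖ ≤ ‖x - q‖) :
    ∀ q ∈ C, ⟪x - p, q - p⟫ ≤ 0 := by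
  haveI : Nonempty C := ⟨⟨p, hp⟩⟩
  have h : ‖x - p‖ = ⨅ w : C, ‖x - w‖ := by
    apply le_antisymm
    · exact le_ciInf fun w => hnear w w.2
    · exact ciInf_le ⟨0, by rintro r ⟨w, rfl⟩; exact norm_nonneg _⟩ (⟨p, hp⟩ : C)
  exact fun q hq => (norm_eq_iInf_iff_real_inner_le_zero hC hp).1 h q hq

/-- Converse: a point of `C` satisfying the variational inequality is the nearest point. -/
private lemma pg_eq_proj {C : Set E} (hC : Convex ℝ C) {x p z : E}
    (hp : p ∈ C) (hnear : ∀ q ∈ C, ‖x - p‖ ≤ ‖x - q‖)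
    (hz : z ∈ C) (hvar : ∀ q ∈ C, ⟪x - z, q - z⟫ ≤ 0) : p = z := by
  have h1 : ⟪x - p, z - p⟫ ≤ 0 := pg_proj_inner_le_zero hC hp hnear z hz
  have h2 : ⟪x - z, p - z⟫ ≤ 0 := hvar p hp
  have key : ⟪z - p, z - p⟫ ≤ 0 := by
    have e : ⟪z - p, z - p⟫ = ⟪x - p, z - p⟫ + ⟪x - z, p - z⟫ := by
      have e1 : (z : E) - p = (x - p) - (x - z) := by abel
      have e2 : (p : E) - z = -(z - p) := by abel
      rw [e2, inner_neg_right]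
      nth_rewrite 1 [e1]
      rw [inner_sub_left]
      ring
    linarith
  have : z - p = 0 := by
    have := real_inner_self_nonpos.mp key
    exact this
  have : z = p := by rwa [sub_eq_zero] at this
  exact this.symm

/-- Firm nonexpansiveness inner-product inequality for nearest-point maps. -/
private lemma pg_firm_inner {C : Set E} (hC : Convex ℝ C) {x y p q : E}
    (hp : p ∈ C) (hnx : ∀ r ∈ C, ‖x - p‖ ≤ ‖x - r‖)
    (hq : q ∈ C) (hny : ∀ r ∈ C, ‖y - q‖ ≤ ‖y - r‖) :
    ‖p - q‖ ^ 2 ≤ ⟪x - y, p - q⟫ := by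
  have h1 : ⟪x - p, q - p⟫ ≤ 0 := pg_proj_inner_le_zero hC hp hnx q hq
  have h2 : ⟪y - q, p - q⟫ ≤ 0 := pg_proj_inner_le_zero hC hq hny p hp
  have e : ⟪x - p, q - p⟫ + ⟪y - q, p - q⟫
      = ⟪p - q, p - q⟫ - ⟪x - y, p - q⟫ := by
    have e1 : (q : E) - p = -(p - q) := by abel
    rw [e1, inner_neg_right]
    have e2 : (x : E) - p = (x - y) - (p - q) + (y - q) := by abel
    rw [e2, inner_add_left, inner_sub_left]
    ring
  rw [real_inner_self_eq_norm_sq] at e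
  linarith

private lemma pg_firm {C : Set E} (hC : Convex ℝ C) {x y p q : E}
    (hp : p ∈ C) (hnx : ∀ r ∈ C, ‖x - p‖ ≤ ‖x - r‖)
    (hq : q ∈ C) (hny : ∀ r ∈ C, ‖y - q‖ ≤ ‖y - r‖) :
    ‖p - q‖ ^ 2 + ‖(x - y) - (p - q)‖ ^ 2 ≤ ‖x - y‖ ^ 2 := by
  have h := pg_firm_inner hC hp hnx hq hny
  have e : ‖(x - y) - (p - q)‖ ^ 2
      = ‖x - y‖ ^ 2 - 2 * ⟪x - y, p - q⟫ + ‖p - q‖ ^ 2 := by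
    rw [norm_sub_sq_real]
  linarith

private lemma pg_nonexpansive {C : Set E} (hC : Convex ℝ C) {x y p q : E}
    (hp : p ∈ C) (hnx : ∀ r ∈ C, ‖x - p‖ ≤ ‖x - r‖)
    (hq : q ∈ C) (hny : ∀ r ∈ C, ‖y - q‖ ≤ ‖y - r‖) :
    ‖p - q‖ ≤ ‖x - y‖ := by
  have h := pg_firm_inner hC hp hnx hq hny
  have hcs : ⟪x - y, p - q⟫ ≤ ‖x - y‖ * ‖p - q‖ := real_inner_le_norm _ _
  rcases eq_or_lt_of_le (norm_nonneg (p - q)) with h0 | h0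
  · rw [← h0]; exact norm_nonneg _
  · nlinarith

end helpers

section helpers2
variable {E : Type*} [NormedAddCommGroup E] [InnerProductSpace ℝ E] [CompleteSpace E]
local notation "⟪" x ", " y "⟫" => @inner ℝ _ _ x y

private lemma pg_lineMap_apply (x y : E) (t : ℝ) :
    (AffineMap.lineMap x y : ℝ →ᵃ[ℝ] E) t = x + t • (y - x) := by
  rw [AffineMap.lineMap_apply]
  simp [vsub_eq_sub, vadd_eq_add, add_comm]

private lemma pg_curve_deriv {Φ : E → ℝ} {Φ' : E → E}
    (hdiff : ∀ z, HasGradientAt Φ (Φ' z) z) (x y : E) (t : ℝ) :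
    HasDerivAt (fun s : ℝ => Φ (x + s • (y - x))) ⟪Φ' (x + t • (y - x)), y - x⟫ t := by
  have hc : HasDerivAt (fun s : ℝ => x + s • (y - x)) (y - x) t := by
    have h : HasDerivAt (fun s : ℝ => s • (y - x)) ((1 : ℝ) • (y - x)) t :=
      (hasDerivAt_id t).smul_const (y - x)
    rw [one_smul] at h
    simpa [add_comm] using h.const_add x
  have hf : HasFDerivAt Φ (InnerProductSpace.toDual ℝ E (Φ' (x + t • (y - x))))
      (x + t • (y - x)) := hasGradientAt_iff_hasFDerivAt.mp (hdiff _)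
  have := hf.comp_hasDerivAt t hc
  simpa [InnerProductSpace.toDual_apply_apply, Function.comp_def] using this

private lemma pg_comp_convex {Φ : E → ℝ} (hconv : ConvexOn ℝ Set.univ Φ) (x y : E) :
    ConvexOn ℝ Set.univ (fun s : ℝ => Φ (x + s • (y - x))) := by
  have h := hconv.comp_affineMap (AffineMap.lineMap x y : ℝ →ᵃ[ℝ] E)
  rw [Set.preimage_univ] at h
  have e : (fun s : ℝ => Φ (x + s • (y - x))) = Φ ∘ (AffineMap.lineMap x y : ℝ →ᵃ[ℝ] E) := by
    ext s
    simp only [Function.comp_apply, pg_lineMap_apply]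
  rw [e]; exact h

private lemma pg_grad_convex_le {Φ : E → ℝ} {Φ' : E → E} (hconv : ConvexOn ℝ Set.univ Φ)
    (hdiff : ∀ z, HasGradientAt Φ (Φ' z) z) (x y : E) :
    Φ x + ⟪Φ' x, y - x⟫ ≤ Φ y := by
  set g : ℝ → ℝ := fun s => Φ (x + s • (y - x)) with hgdef
  have hgc : ConvexOn ℝ Set.univ g := pg_comp_convex hconv x y
  have hd : HasDerivAt g ⟪Φ' x, y - x⟫ 0 := by
    have := pg_curve_deriv hdiff x y 0
    simpa using this
  have hslope := hgc.le_slope_of_hasDerivAt (Set.mem_univ (0:ℝ)) (Set.mem_univ (1:ℝ))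
    zero_lt_one hd
  rw [slope_def_field] at hslope
  have e1 : g 1 = Φ y := by
    simp only [hgdef, one_smul]
    congr 1
    abel
  have e0 : g 0 = Φ x := by simp [hgdef]
  rw [e1, e0] at hslope
  have : ⟪Φ' x, y - x⟫ ≤ Φ y - Φ x := by
    calc ⟪Φ' x, y - x⟫ ≤ (Φ y - Φ x) / (1 - 0) := hslope
    _ = Φ y - Φ x := by norm_num
  linarith

private lemma pg_optimality {Φ : E → ℝ} {Φ' : E → E} {C : Set E} (hC : Convex ℝ C)
    (hdiff : ∀ z, HasGradientAt Φ (Φ' z) z) {u : E} (huC : u ∈ C)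
    (humin : ∀ v ∈ C, Φ u ≤ Φ v) : ∀ q ∈ C, 0 ≤ ⟪Φ' u, q - u⟫ := by
  intro q hq
  set g : ℝ → ℝ := fun s => Φ (u + s • (q - u)) with hgdef
  have hd : HasDerivWithinAt g ⟪Φ' u, q - u⟫ (Set.Ioi 0) 0 := by
    have := pg_curve_deriv hdiff u q 0
    simpa using this.hasDerivWithinAt
  have htend := (hasDerivWithinAt_iff_tendsto_slope' (Set.notMem_Ioi_self)).mp hd
  refine ge_of_tendsto htend ?_
  have hev : Set.Ioc (0:ℝ) 1 ∈ 𝓝[>] (0:ℝ) :=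
    Ioc_mem_nhdsGT_of_mem ⟨le_refl 0, zero_lt_one⟩
  filter_upwards [hev] with t ht
  rw [slope_def_field]
  have hmem : u + t • (q - u) ∈ C := by
    have := hC.lineMap_mem huC hq (Set.mem_Icc.mpr ⟨ht.1.le, ht.2⟩)
    rwa [pg_lineMap_apply] at this
  have h1 : Φ u ≤ g t := humin _ hmem
  have h0 : g 0 = Φ u := by simp [hgdef]
  have ht0 : (0:ℝ) < t - 0 := by simpa using ht.1
  apply div_nonneg _ ht0.le
  rw [h0]; linarith

private lemma pg_descent {Φ : E → ℝ} {Φ' : E → E}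
    (hdiff : ∀ z, HasGradientAt Φ (Φ' z) z)
    {β : ℝ} (hβ : 0 < β) (hlip : ∀ p q : E, ‖Φ' p - Φ' q‖ ≤ β * ‖p - q‖)
    (hΦ'cont : Continuous Φ') (x y : E) :
    Φ y ≤ Φ x + ⟪Φ' x, y - x⟫ + β / 2 * ‖y - x‖ ^ 2 := by
  set c : ℝ → E := fun s => x + s • (y - x) with hcdef
  set G : ℝ → ℝ := fun s => ⟪Φ' (c s), y - x⟫ with hGdef
  have hccont : Continuous c := by
    apply continuous_const.add (continuous_id.smul continuous_const)
  have hGcont : Continuous G := by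
    apply Continuous.inner (hΦ'cont.comp hccont) continuous_const
  have hd : ∀ t, HasDerivAt (fun s => Φ (c s)) (G t) t := fun t => pg_curve_deriv hdiff x y t
  have hint : ∫ t in (0:ℝ)..1, G t = Φ (c 1) - Φ (c 0) := by
    apply intervalIntegral.integral_eq_sub_of_hasDerivAt (fun t _ => hd t)
      (hGcont.intervalIntegrable 0 1)
  set K : ℝ := ‖y - x‖ ^ 2 with hKdef
  have hbound : ∀ t ∈ Set.Icc (0:ℝ) 1, G t ≤ G 0 + β * t * K := by
    intro t ht
    have e : G t - G 0 = ⟪Φ' (c t) - Φ' (c 0), y - x⟫ := by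
      rw [hGdef]; simp only [← inner_sub_left]
    have h1 : ⟪Φ' (c t) - Φ' (c 0), y - x⟫ ≤ ‖Φ' (c t) - Φ' (c 0)‖ * ‖y - x‖ :=
      real_inner_le_norm _ _
    have h2 : ‖Φ' (c t) - Φ' (c 0)‖ ≤ β * ‖c t - c 0‖ := hlip _ _
    have h3 : c t - c 0 = t • (y - x) := by
      simp only [hcdef, zero_smul, add_zero]
      abel
    have h4 : ‖c t - c 0‖ = t * ‖y - x‖ := by
      rw [h3, norm_smul, Real.norm_eq_abs, abs_of_nonneg ht.1]
    have h5 : ‖Φ' (c t) - Φ' (c 0)‖ * ‖y - x‖ ≤ β * (t * ‖y - x‖) * ‖y - x‖ := by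
      apply mul_le_mul_of_nonneg_right _ (norm_nonneg _)
      calc ‖Φ' (c t) - Φ' (c 0)‖ ≤ β * ‖c t - c 0‖ := h2
      _ = β * (t * ‖y - x‖) := by rw [h4]
    have h6 : β * (t * ‖y - x‖) * ‖y - x‖ = β * t * K := by rw [hKdef]; ring
    linarith
  have hib : IntervalIntegrable (fun t : ℝ => G 0 + β * t * K) MeasureTheory.volume 0 1 := by
    apply Continuous.intervalIntegrable
    continuity
  have hmono : ∫ t in (0:ℝ)..1, G t ≤ ∫ t in (0:ℝ)..1, (G 0 + β * t * K) :=
    intervalIntegral.integral_mono_on zero_le_one (hGcont.intervalIntegrable 0 1) hib hbound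
  have hval : ∫ t in (0:ℝ)..1, (G 0 + β * t * K) = G 0 + β / 2 * K := by
    rw [intervalIntegral.integral_add intervalIntegrable_const
      (by apply Continuous.intervalIntegrable; continuity)]
    have h5 : ∫ t in (0:ℝ)..1, β * t * K = β * K * ∫ t in (0:ℝ)..1, t := by
      rw [← intervalIntegral.integral_const_mul]
      apply intervalIntegral.integral_congr
      intro t _
      ring
    rw [h5]
    simp
    ring
  have hc1 : c 1 = y := by
    simp only [hcdef, one_smul]
    abel
  have hc0 : c 0 = x := by simp [hcdef]
  have hG0 : G 0 = ⟪Φ' x, y - x⟫ := by rw [hGdef]; simp only [hc0]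
  rw [hc1, hc0] at hint
  rw [hval, hG0] at hmono
  linarith [hint ▸ hmono]

private lemma pg_cocoercive {Φ : E → ℝ} {Φ' : E → E} (hconv : ConvexOn ℝ Set.univ Φ)
    (hdiff : ∀ z, HasGradientAt Φ (Φ' z) z)
    {β : ℝ} (hβ : 0 < β) (hlip : ∀ p q : E, ‖Φ' p - Φ' q‖ ≤ β * ‖p - q‖)
    (hΦ'cont : Continuous Φ') (x y : E) :
    β⁻¹ * ‖Φ' x - Φ' y‖ ^ 2 ≤ ⟪Φ' x - Φ' y, x - y⟫ := by
  have half : ∀ p q : E, Φ p + ⟪Φ' p, q - p⟫ + 1 / (2 * β) * ‖Φ' q - Φ' p‖ ^ 2 ≤ Φ q := by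
    intro p q
    set g : E := Φ' q - Φ' p with hgd
    set z : E := q - β⁻¹ • g with hzd
    have hd := pg_descent hdiff hβ hlip hΦ'cont q z
    have hcv := pg_grad_convex_le hconv hdiff p z
    have e1 : z - q = -(β⁻¹ • g) := by rw [hzd]; abel
    have e2 : ⟪Φ' q, z - q⟫ = -(β⁻¹ * ⟪Φ' q, g⟫) := by
      rw [e1, inner_neg_right, real_inner_smul_right]
    have e3 : ‖z - q‖ ^ 2 = β⁻¹ ^ 2 * ‖g‖ ^ 2 := by
      rw [e1, norm_neg, norm_smul, Real.norm_eq_abs, abs_of_nonneg (by positivity : (0:ℝ) ≤ β⁻¹)]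
      ring
    have e4 : ⟪Φ' p, z - p⟫ = ⟪Φ' p, q - p⟫ - β⁻¹ * ⟪Φ' p, g⟫ := by
      have : z - p = (q - p) - β⁻¹ • g := by rw [hzd]; abel
      rw [this, inner_sub_right, real_inner_smul_right]
    have e5 : ⟪Φ' q, g⟫ - ⟪Φ' p, g⟫ = ‖g‖ ^ 2 := by
      rw [← inner_sub_left, ← hgd, real_inner_self_eq_norm_sq]
    rw [e2, e3] at hd
    rw [e4] at hcv
    have hβ' : (0:ℝ) < β⁻¹ := by positivity
    have : Φ p + ⟪Φ' p, q - p⟫ - β⁻¹ * ⟪Φ' p, g⟫ ≤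
        Φ q - β⁻¹ * ⟪Φ' q, g⟫ + β / 2 * (β⁻¹ ^ 2 * ‖g‖ ^ 2) := le_trans (by linarith) hd
    have efin : β / 2 * (β⁻¹ ^ 2 * ‖g‖ ^ 2) = 1 / (2 * β) * ‖g‖ ^ 2 := by
      field_simp
    rw [efin] at this
    have e5b : β⁻¹ * ⟪Φ' q, g⟫ - β⁻¹ * ⟪Φ' p, g⟫ = β⁻¹ * ‖g‖ ^ 2 := by
      rw [← mul_sub, e5]
    have e10 : β⁻¹ * ‖g‖ ^ 2 = 2 * (1 / (2 * β) * ‖g‖ ^ 2) := by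
      field_simp
    linarith
  have h1 := half x y
  have h2 := half y x
  have e6sq : ‖Φ' y - Φ' x‖ = ‖Φ' x - Φ' y‖ := norm_sub_rev _ _
  rw [e6sq] at h1
  have e7 : ⟪Φ' x, y - x⟫ + ⟪Φ' y, x - y⟫ = -⟪Φ' x - Φ' y, x - y⟫ := by
    rw [inner_sub_left]
    have : (y : E) - x = -(x - y) := by abel
    rw [this, inner_neg_right]
    ring
  have e9 : β⁻¹ * ‖Φ' x - Φ' y‖ ^ 2 = 2 * (1 / (2 * β) * ‖Φ' x - Φ' y‖ ^ 2) := by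
    field_simp
  linarith [h1, h2, e7]

end helpers2


private lemma pg_qf_bounded {b α : ℕ → ℝ} (hα : ∀ n, 0 ≤ α n) (hsum : Summable α)
    (hstep : ∀ n, b (n + 1) ≤ b n + α n) : ∀ n, b n ≤ b 0 + ∑' k, α k := by
  have hpart : ∀ n, b n ≤ b 0 + ∑ k ∈ Finset.range n, α k := by
    intro n
    induction n with
    | zero => simp
    | succ m ih =>
      calc b (m + 1) ≤ b m + α m := hstep m
      _ ≤ b 0 + ∑ k ∈ Finset.range m, α k + α m := by linarith
      _ = b 0 + ∑ k ∈ Finset.range (m + 1), α k := by rw [Finset.sum_range_succ]; ring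
  intro n
  calc b n ≤ b 0 + ∑ k ∈ Finset.range n, α k := hpart n
  _ ≤ b 0 + ∑' k, α k := by
      have := Summable.sum_le_tsum (Finset.range n) (fun k _ => hα k) hsum
      linarith

private lemma pg_summable_of_qf {s t α : ℕ → ℝ} (ht : ∀ n, 0 ≤ t n) (hs : ∀ n, 0 ≤ s n)
    (hα : ∀ n, 0 ≤ α n) (hsum : Summable α)
    (hstep : ∀ n, s (n + 1) + t n ≤ s n + α n) : Summable t := by
  apply summable_of_sum_range_le ht (c := s 0 + ∑' k, α k)
  intro n
  have hpart : ∑ i ∈ Finset.range n, t i ≤ s 0 - s n + ∑ k ∈ Finset.range n, α k := by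
    induction n with
    | zero => simp
    | succ m ih =>
      have := hstep m
      rw [Finset.sum_range_succ, Finset.sum_range_succ]
      linarith
  have := Summable.sum_le_tsum (Finset.range n) (fun k _ => hα k) hsum
  have := hs n
  linarith

private lemma pg_qf_tendsto_zero {b α : ℕ → ℝ} (hb : ∀ n, 0 ≤ b n)
    (hα : ∀ n, 0 ≤ α n) (hsum : Summable α)
    (hstep : ∀ n, b (n + 1) ≤ b n + α n)
    {φ : ℕ → ℕ} (hφ : StrictMono φ) (hsub : Tendsto (b ∘ φ) atTop (𝓝 0)) :
    Tendsto b atTop (𝓝 0) := by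
  set r : ℕ → ℝ := fun n => ∑' k, α (k + n) with hrdef
  have hrtend : Tendsto r atTop (𝓝 0) := tendsto_sum_nat_add α
  have hrnn : ∀ n, 0 ≤ r n := fun n => tsum_nonneg fun k => hα _
  have hrrec : ∀ n, r n = α n + r (n + 1) := by
    intro n
    have hsumn : Summable fun k => α (k + n) := (summable_nat_add_iff n).2 hsum
    have h := Summable.tsum_eq_zero_add hsumn
    simp only [hrdef]
    rw [h]
    congr 1
    · simp
    · apply tsum_congr
      intro k
      congr 1
      omega
  set c : ℕ → ℝ := fun n => b n + r n with hcdef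
  have hcanti : Antitone c := by
    apply antitone_nat_of_succ_le
    intro n
    have h1 := hstep n
    have h2 := hrrec n
    simp only [hcdef]
    linarith
  have hcsub : Tendsto (c ∘ φ) atTop (𝓝 0) := by
    have : Tendsto (r ∘ φ) atTop (𝓝 0) := hrtend.comp hφ.tendsto_atTop
    have h := hsub.add this
    rw [add_zero] at h
    exact h
  have hctend : Tendsto c atTop (𝓝 0) := by
    rw [Metric.tendsto_atTop] at hcsub ⊢
    intro ε hε
    obtain ⟨K, hK⟩ := hcsub ε hε
    refine ⟨φ K, fun n hn => ?_⟩
    have h1 : c n ≤ c (φ K) := hcanti hn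
    have h2 : 0 ≤ c n := by
      have := hb n; have := hrnn n; simp only [hcdef]; linarith
    have h3 := hK K le_rfl
    simp only [Function.comp_apply, Real.dist_eq, sub_zero] at h3 ⊢
    rw [abs_of_nonneg h2]
    have h4 := lt_of_le_of_lt (le_abs_self _) h3
    linarith
  have hble : ∀ n, b n ≤ c n := fun n => by
    have := hrnn n; simp only [hcdef]; linarith
  exact tendsto_of_tendsto_of_tendsto_of_le_of_le tendsto_const_nhds hctend hb hble


open scoped RealInnerProductSpace

/-- **Convergence of the inexact projection-gradient method** (Theorem 1 of the paper).
Minimizing a convex differentiable function `Φ` with `β`-Lipschitz gradient over a nonempty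
closed convex set `C` on which `Φ` attains its minimum, the iteration
`w_{n+1} = P_C (w_n - γ_n ∇Φ(w_n)) + a_n`, with step sizes bounded away from `0` and below
`2/β` and summable errors `(a_n)`, converges to a minimizer of `Φ` over `C`. -/
theorem stmt_0
    (d : ℕ) (Φ : EuclideanSpace ℝ (Fin d) → ℝ)
    (Φ' : EuclideanSpace ℝ (Fin d) → EuclideanSpace ℝ (Fin d))
    (hconv : ConvexOn ℝ Set.univ Φ)
    (hdiff : ∀ x, HasGradientAt Φ (Φ' x) x)
    (β : ℝ) (hβ : 0 < β)
    (hlip : LipschitzWith (Real.toNNReal β) Φ')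
    (C : Set (EuclideanSpace ℝ (Fin d)))
    (hCne : C.Nonempty) (hCcl : IsClosed C) (hCcv : Convex ℝ C)
    (hmin : ∃ u ∈ C, ∀ v ∈ C, Φ u ≤ Φ v)
    (P : EuclideanSpace ℝ (Fin d) → EuclideanSpace ℝ (Fin d))
    (hP : ∀ x, P x ∈ C ∧ ∀ q ∈ C, ‖x - P x‖ ≤ ‖x - q‖)
    (γ : ℕ → ℝ) (hγ : ∀ n, 0 < γ n)
    (hγinf : ∃ ε > 0, ∀ n, ε ≤ γ n)
    (hγsup : ∃ δ, δ < 2 / β ∧ ∀ n, γ n ≤ δ)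
    (a : ℕ → EuclideanSpace ℝ (Fin d))
    (ha : Summable fun n => ‖a n‖)
    (w : ℕ → EuclideanSpace ℝ (Fin d))
    (hrec : ∀ n, w (n + 1) = P (w n - γ n • Φ' (w n)) + a n) :
    ∃ wstar ∈ C, Tendsto w atTop (𝓝 wstar) ∧ ∀ v ∈ C, Φ wstar ≤ Φ v := by
  classical
  obtain ⟨u, huC, humin⟩ := hmin
  obtain ⟨ε, hε, hεle⟩ := hγinf
  obtain ⟨δ, hδlt, hδge⟩ := hγsup
  have hδpos : 0 < δ := lt_of_lt_of_le (hγ 0) (hδge 0)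
  have hlipn : ∀ p q, ‖Φ' p - Φ' q‖ ≤ β * ‖p - q‖ := by
    intro p q
    have h := hlip.dist_le_mul p q
    rw [dist_eq_norm, dist_eq_norm, Real.coe_toNNReal β hβ.le] at h
    exact h
  have hΦ'cont : Continuous Φ' := hlip.continuous
  set v : ℕ → EuclideanSpace ℝ (Fin d) := fun n => P (w n - γ n • Φ' (w n)) with hvdef
  have hrec' : ∀ n, w (n + 1) = v n + a n := hrec
  have hPmem : ∀ x, P x ∈ C := fun x => (hP x).1
  have hPnear : ∀ x, ∀ q ∈ C, ‖x - P x‖ ≤ ‖x - q‖ := fun x => (hP x).2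
  -- points satisfying the variational inequality are fixed points of the iteration map
  have hfix : ∀ z, z ∈ C → (∀ q ∈ C, 0 ≤ ⟪Φ' z, q - z⟫) → ∀ γ' : ℝ, 0 ≤ γ' →
      P (z - γ' • Φ' z) = z := by
    intro z hz hopt γ' hγ'
    apply pg_eq_proj hCcv (hPmem _) (hPnear _) hz
    intro q hq
    have e : (z - γ' • Φ' z) - z = -(γ' • Φ' z) := by abel
    rw [e, inner_neg_left, real_inner_smul_left]
    have h := hopt q hq
    have : 0 ≤ γ' * ⟪Φ' z, q - z⟫ := mul_nonneg hγ' h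
    linarith
  set κ : ℝ := ε * (2 / β - δ) with hκdef
  have hκpos : 0 < κ := by
    apply mul_pos hε
    linarith
  -- the key one-step decrease estimate
  have key : ∀ z, z ∈ C → (∀ q ∈ C, 0 ≤ ⟪Φ' z, q - z⟫) → ∀ n,
      ‖v n - z‖ ^ 2 + ‖(w n - v n) - γ n • (Φ' (w n) - Φ' z)‖ ^ 2
        + κ * ‖Φ' (w n) - Φ' z‖ ^ 2 ≤ ‖w n - z‖ ^ 2 := by
    intro z hz hopt n
    set x : EuclideanSpace ℝ (Fin d) := w n - γ n • Φ' (w n) with hxdef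
    set y : EuclideanSpace ℝ (Fin d) := z - γ n • Φ' z with hydef
    have hPy : P y = z := hfix z hz hopt (γ n) (hγ n).le
    have hfirm := pg_firm hCcv (hPmem x) (hPnear x) (hPmem y) (hPnear y)
    rw [hPy] at hfirm
    have hvx : v n = P x := rfl
    set g : EuclideanSpace ℝ (Fin d) := Φ' (w n) - Φ' z with hgdef
    have hxy : x - y = (w n - z) - γ n • g := by
      simp only [hxdef, hydef, hgdef, smul_sub]
      abel
    have hco := pg_cocoercive hconv hdiff hβ hlipn hΦ'cont (w n) z
    rw [← hgdef] at hco
    have hexp : ‖x - y‖ ^ 2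
        = ‖w n - z‖ ^ 2 - 2 * γ n * ⟪g, w n - z⟫ + γ n ^ 2 * ‖g‖ ^ 2 := by
      have e1 : ⟪w n - z, γ n • g⟫ = γ n * ⟪g, w n - z⟫ := by
        rw [real_inner_smul_right, real_inner_comm]
      have e2 : ‖γ n • g‖ ^ 2 = γ n ^ 2 * ‖g‖ ^ 2 := by
        rw [norm_smul, Real.norm_eq_abs, abs_of_nonneg (hγ n).le]
        ring
      rw [hxy, norm_sub_sq_real, e1, e2]
      ring
    have hcoef : κ ≤ 2 * γ n * β⁻¹ - γ n ^ 2 := by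
      have h1 : ε ≤ γ n := hεle n
      have h2 : γ n ≤ δ := hδge n
      have h3 : (2:ℝ) / β = 2 * β⁻¹ := by rw [div_eq_mul_inv]
      have hκeq : κ = ε * (2 * β⁻¹ - δ) := by rw [hκdef, h3]
      have hpos : (0:ℝ) < 2 * β⁻¹ - δ := by
        rw [← h3]; linarith
      have hq1 : ε * (2 * β⁻¹ - δ) ≤ γ n * (2 * β⁻¹ - δ) :=
        mul_le_mul_of_nonneg_right h1 hpos.le
      have hq2 : γ n * (2 * β⁻¹ - δ) ≤ γ n * (2 * β⁻¹ - γ n) :=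
        mul_le_mul_of_nonneg_left (by linarith) (hγ n).le
      linarith
    have hcoef2 : κ * ‖g‖ ^ 2 ≤ (2 * γ n * β⁻¹ - γ n ^ 2) * ‖g‖ ^ 2 :=
      mul_le_mul_of_nonneg_right hcoef (sq_nonneg _)
    have hco2 : 2 * γ n * (β⁻¹ * ‖g‖ ^ 2) ≤ 2 * γ n * ⟪g, w n - z⟫ := by
      apply mul_le_mul_of_nonneg_left hco (by linarith [hγ n])
    have hxyle : ‖x - y‖ ^ 2 ≤ ‖w n - z‖ ^ 2 - κ * ‖g‖ ^ 2 := by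
      linarith
    have e3 : (x - y) - (P x - z) = (w n - v n) - γ n • g := by
      rw [← hvx, hxy]
      abel
    rw [e3] at hfirm
    rw [← hvx] at hfirm
    linarith
  -- quasi-Fejér monotonicity with respect to any such fixed point
  have qf : ∀ z, z ∈ C → (∀ q ∈ C, 0 ≤ ⟪Φ' z, q - z⟫) →
      (∀ n, ‖v n - z‖ ≤ ‖w n - z‖) ∧ (∀ n, ‖w (n + 1) - z‖ ≤ ‖w n - z‖ + ‖a n‖) := by
    intro z hz hopt
    have h1 : ∀ n, ‖v n - z‖ ≤ ‖w n - z‖ := by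
      intro n
      have hk := key z hz hopt n
      apply pg_le_of_sq_le_sq (norm_nonneg _) (norm_nonneg _)
      have hp1 : 0 ≤ ‖(w n - v n) - γ n • (Φ' (w n) - Φ' z)‖ ^ 2 := sq_nonneg _
      have hp2 : 0 ≤ κ * ‖Φ' (w n) - Φ' z‖ ^ 2 := mul_nonneg hκpos.le (sq_nonneg _)
      linarith
    refine ⟨h1, fun n => ?_⟩
    calc ‖w (n + 1) - z‖ = ‖(v n - z) + a n‖ := by
          rw [hrec' n]
          congr 1
          abel
    _ ≤ ‖v n - z‖ + ‖a n‖ := norm_add_le _ _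
    _ ≤ ‖w n - z‖ + ‖a n‖ := by linarith [h1 n]
  have hoptu : ∀ q ∈ C, 0 ≤ ⟪Φ' u, q - u⟫ := pg_optimality hCcv hdiff huC humin
  obtain ⟨hvu, hqfu⟩ := qf u huC hoptu
  set S : ℝ := ∑' n, ‖a n‖ with hSdef
  have hSnn : 0 ≤ S := tsum_nonneg fun n => norm_nonneg _
  set M : ℝ := ‖w 0 - u‖ + S with hMdef
  have hbM : ∀ n, ‖w n - u‖ ≤ M :=
    pg_qf_bounded (fun n => norm_nonneg (a n)) ha hqfu
  have hanorm : ∀ n, ‖a n‖ ≤ S := fun n => Summable.le_tsum ha n fun m _ => norm_nonneg _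
  -- summability of the deficiency terms
  set g : ℕ → EuclideanSpace ℝ (Fin d) := fun n => Φ' (w n) - Φ' u with hgdef
  set t : ℕ → ℝ := fun n => ‖(w n - v n) - γ n • g n‖ ^ 2 + κ * ‖g n‖ ^ 2 with htdef
  have htnn : ∀ n, 0 ≤ t n := fun n => by
    have : 0 ≤ κ * ‖g n‖ ^ 2 := by positivity
    have := sq_nonneg ‖(w n - v n) - γ n • g n‖
    simp only [htdef]
    linarith
  have hstep2 : ∀ n, ‖w (n + 1) - u‖ ^ 2 + t n ≤ ‖w n - u‖ ^ 2 + (2 * M + S) * ‖a n‖ := by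
    intro n
    have hk := key u huC hoptu n
    have h1 : ‖w (n + 1) - u‖ ≤ ‖v n - u‖ + ‖a n‖ := by
      calc ‖w (n + 1) - u‖ = ‖(v n - u) + a n‖ := by
            rw [hrec' n]; congr 1; abel
      _ ≤ ‖v n - u‖ + ‖a n‖ := norm_add_le _ _
    have h2 : ‖w (n + 1) - u‖ ^ 2 ≤ (‖v n - u‖ + ‖a n‖) ^ 2 :=
      pow_le_pow_left₀ (norm_nonneg _) h1 2
    have h3 : ‖v n - u‖ ≤ M := le_trans (hvu n) (hbM n)
    have h4 : ‖a n‖ ≤ S := hanorm n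
    have h5 : 0 ≤ ‖a n‖ := norm_nonneg _
    have h6 : 0 ≤ ‖v n - u‖ := norm_nonneg _
    simp only [htdef]
    nlinarith
  have hMnn : 0 ≤ M := by
    rw [hMdef]
    linarith [hSnn, norm_nonneg (w 0 - u)]
  have hcnn : 0 ≤ 2 * M + S := by linarith
  have htsummable : Summable t :=
    pg_summable_of_qf (s := fun n => ‖w n - u‖ ^ 2) (α := fun n => (2 * M + S) * ‖a n‖)
      htnn (fun n => sq_nonneg _) (fun n => mul_nonneg hcnn (norm_nonneg _))
      (ha.mul_left _) hstep2
  have ht0 : Tendsto t atTop (𝓝 0) := htsummable.tendsto_atTop_zero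
  -- the gradient gap and the projection gap tend to zero
  have hgn0 : Tendsto (fun n => ‖g n‖) atTop (𝓝 0) := by
    have h2 : Tendsto (fun n => κ * ‖g n‖ ^ 2) atTop (𝓝 0) := by
      apply tendsto_of_tendsto_of_tendsto_of_le_of_le tendsto_const_nhds ht0
      · intro n; positivity
      · intro n
        have := sq_nonneg ‖(w n - v n) - γ n • g n‖
        simp only [htdef]
        linarith
    have h3 : Tendsto (fun n => ‖g n‖ ^ 2) atTop (𝓝 0) := by
      have h := h2.const_mul κ⁻¹
      rw [mul_zero] at h
      refine h.congr fun n => ?_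
      rw [← mul_assoc, inv_mul_cancel₀ (ne_of_gt hκpos), one_mul]
    have h4 := h3.sqrt
    rw [Real.sqrt_zero] at h4
    refine h4.congr fun n => ?_
    rw [Real.sqrt_sq (norm_nonneg _)]
  have hdist0 : Tendsto (fun n => ‖(w n - v n) - γ n • g n‖) atTop (𝓝 0) := by
    have h2 : Tendsto (fun n => ‖(w n - v n) - γ n • g n‖ ^ 2) atTop (𝓝 0) := by
      apply tendsto_of_tendsto_of_tendsto_of_le_of_le tendsto_const_nhds ht0
      · intro n; positivity
      · intro n
        have : 0 ≤ κ * ‖g n‖ ^ 2 := by positivity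
        simp only [htdef]
        linarith
    have h4 := h2.sqrt
    rw [Real.sqrt_zero] at h4
    refine h4.congr fun n => ?_
    rw [Real.sqrt_sq (norm_nonneg _)]
  have hwv0 : Tendsto (fun n => ‖w n - v n‖) atTop (𝓝 0) := by
    have hup : Tendsto (fun n => ‖(w n - v n) - γ n • g n‖ + δ * ‖g n‖) atTop (𝓝 0) := by
      have := hdist0.add (hgn0.const_mul δ)
      simpa using this
    apply tendsto_of_tendsto_of_tendsto_of_le_of_le tendsto_const_nhds hup
    · intro n; exact norm_nonneg _
    · intro n
      calc ‖w n - v n‖ = ‖((w n - v n) - γ n • g n) + γ n • g n‖ := by congr 1; abel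
      _ ≤ ‖(w n - v n) - γ n • g n‖ + ‖γ n • g n‖ := norm_add_le _ _
      _ ≤ ‖(w n - v n) - γ n • g n‖ + δ * ‖g n‖ := by
            have : ‖γ n • g n‖ = γ n * ‖g n‖ := by
              rw [norm_smul, Real.norm_eq_abs, abs_of_nonneg (hγ n).le]
            rw [this]
            have := mul_le_mul_of_nonneg_right (hδge n) (norm_nonneg (g n))
            linarith
  -- extract a convergent subsequence
  have hbd : ∀ n, w n ∈ Metric.closedBall (0 : EuclideanSpace ℝ (Fin d)) (M + ‖u‖) := by
    intro n
    rw [Metric.mem_closedBall, dist_zero_right]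
    calc ‖w n‖ = ‖(w n - u) + u‖ := by congr 1; abel
    _ ≤ ‖w n - u‖ + ‖u‖ := norm_add_le _ _
    _ ≤ M + ‖u‖ := by linarith [hbM n]
  obtain ⟨wstar, _, φ, hφ, hwφ⟩ :=
    tendsto_subseq_of_bounded Metric.isBounded_closedBall hbd
  have hγφmem : ∀ k, γ (φ k) ∈ Set.Icc ε δ := fun k => ⟨hεle _, hδge _⟩
  obtain ⟨γbar, hγbarmem, ψ, hψ, hγψ⟩ := isCompact_Icc.tendsto_subseq hγφmem
  set σ : ℕ → ℕ := φ ∘ ψ with hσdef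
  have hσ : StrictMono σ := hφ.comp hψ
  have hwσ : Tendsto (w ∘ σ) atTop (𝓝 wstar) := hwφ.comp hψ.tendsto_atTop
  have hγσ : Tendsto (γ ∘ σ) atTop (𝓝 γbar) := hγψ
  -- the subsequential limit is a fixed point
  have hwvσ : Tendsto (fun k => w (σ k) - v (σ k)) atTop (𝓝 0) := by
    rw [tendsto_zero_iff_norm_tendsto_zero]
    exact (hwv0.comp hσ.tendsto_atTop)
  have hvσ : Tendsto (v ∘ σ) atTop (𝓝 wstar) := by
    have := hwσ.sub hwvσ
    rw [sub_zero] at this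
    refine this.congr fun k => ?_
    simp only [Function.comp_apply]
    abel
  have hPnonexp : ∀ x y, ‖P x - P y‖ ≤ ‖x - y‖ := fun x y =>
    pg_nonexpansive hCcv (hPmem x) (hPnear x) (hPmem y) (hPnear y)
  have hPcont : Continuous P := by
    apply LipschitzWith.continuous (K := 1)
    apply LipschitzWith.of_dist_le_mul
    intro x y
    rw [dist_eq_norm, dist_eq_norm, NNReal.coe_one, one_mul]
    exact hPnonexp x y
  have hglimit : Tendsto (fun k => Φ' (w (σ k))) atTop (𝓝 (Φ' wstar)) :=
    (hΦ'cont.tendsto wstar).comp hwσ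
  have harg : Tendsto (fun k => w (σ k) - γ (σ k) • Φ' (w (σ k))) atTop
      (𝓝 (wstar - γbar • Φ' wstar)) := by
    apply Tendsto.sub hwσ
    exact hγσ.smul hglimit
  have hvσ2 : Tendsto (v ∘ σ) atTop (𝓝 (P (wstar - γbar • Φ' wstar))) :=
    (hPcont.tendsto _).comp harg
  have hfixeq : P (wstar - γbar • Φ' wstar) = wstar := tendsto_nhds_unique hvσ2 hvσ
  have hwstarC : wstar ∈ C := by
    rw [← hfixeq]
    exact hPmem _
  have hγbarpos : 0 < γbar := lt_of_lt_of_le hε hγbarmem.1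
  -- variational inequality and minimality at the limit
  have hoptstar : ∀ q ∈ C, 0 ≤ ⟪Φ' wstar, q - wstar⟫ := by
    intro q hq
    set xs : EuclideanSpace ℝ (Fin d) := wstar - γbar • Φ' wstar with hxsdef
    have h := pg_proj_inner_le_zero hCcv (hPmem xs) (hPnear xs) q hq
    rw [hfixeq] at h
    have e : xs - wstar = -(γbar • Φ' wstar) := by rw [hxsdef]; abel
    rw [e, inner_neg_left, real_inner_smul_left] at h
    have h2 : 0 ≤ γbar * ⟪Φ' wstar, q - wstar⟫ := by linarith
    have h3 : γbar * 0 ≤ γbar * ⟪Φ' wstar, q - wstar⟫ := by rw [mul_zero]; exact h2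
    exact (mul_le_mul_iff_right₀ hγbarpos).mp h3
  have hminstar : ∀ q ∈ C, Φ wstar ≤ Φ q := by
    intro q hq
    have h1 := pg_grad_convex_le hconv hdiff wstar q
    have h2 := hoptstar q hq
    linarith
  -- quasi-Fejér convergence to the limit point
  obtain ⟨_, hqfstar⟩ := qf wstar hwstarC hoptstar
  have hbsub : Tendsto ((fun n => ‖w n - wstar‖) ∘ σ) atTop (𝓝 0) := by
    have := (tendsto_iff_norm_sub_tendsto_zero).mp hwσ
    exact this
  have hfinal : Tendsto (fun n => ‖w n - wstar‖) atTop (𝓝 0) :=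
    pg_qf_tendsto_zero (fun n => norm_nonneg _) (fun n => norm_nonneg _) ha
      hqfstar hσ hbsub
  refine ⟨wstar, hwstarC, ?_, hminstar⟩
  exact (tendsto_iff_norm_sub_tendsto_zero).mpr hfinal
end

section
/- Let Φ: ℝ^d → ℝ be a differentiable convex function whose gradient ∇Φ is Lipschitz-continuous with constant β > 0, let C ⊆ ℝ^d be a nonempty closed convex set, and suppose that Φ attains a minimum over C. Let w₀ ∈ ℝ^d, let (γₙ) be a sequence in (0,∞) with infₙ γₙ > 0 and supₙ γₙ < 2/β, and define the exact projection-gradient sequence w_{n+1} = P_C(wₙ − γₙ ∇Φ(wₙ)). Then there exists ϑ > 0 such that for every n ∈ ℕ, Φ(w_{n+1}) − inf_{w∈C} Φ(w) ≤ ϑ/(n+1). -/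
open Filter Topology

open Set
open scoped RealInnerProductSpace

section Aux
variable {E : Type*} [NormedAddCommGroup E] [InnerProductSpace ℝ E] [CompleteSpace E]

lemma line_hasDerivAt (Φ : E → ℝ) (Φ' : E → E)
    (hdiff : ∀ x, HasGradientAt Φ (Φ' x) x) (a v : E) (t : ℝ) :
    HasDerivAt (fun s : ℝ => Φ (a + s • v)) ⟪Φ' (a + t • v), v⟫ t := by
  have hc : HasDerivAt (fun s : ℝ => a + s • v) v t := by
    simpa using ((hasDerivAt_id t).smul_const v).const_add a
  have hf := (hasGradientAt_iff_hasFDerivAt.1 (hdiff (a + t • v)))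
  have := hf.comp_hasDerivAt t hc
  exact this

lemma grad_convex_ineq (Φ : E → ℝ) (Φ' : E → E)
    (hconv : ConvexOn ℝ Set.univ Φ)
    (hdiff : ∀ x, HasGradientAt Φ (Φ' x) x) (a b : E) :
    ⟪Φ' a, b - a⟫ ≤ Φ b - Φ a := by
  set v := b - a
  have hφ : ConvexOn ℝ Set.univ (fun t : ℝ => Φ (a + t • v)) := by
    have := hconv.comp_affineMap (AffineMap.lineMap a b)
    have heq : (fun t : ℝ => Φ (a + t • v)) = (Φ ∘ (AffineMap.lineMap a b)) := by
      funext t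
      simp [AffineMap.lineMap_apply, v]
      congr 1
      abel
    rw [heq]
    simpa using this
  have h0 := line_hasDerivAt Φ Φ' hdiff a v 0
  have := ConvexOn.le_slope_of_hasDerivAt hφ (Set.mem_univ (0:ℝ)) (Set.mem_univ 1)
    one_pos (by simpa using h0)
  simpa [slope_def_field, v] using this

lemma descent_lemma (Φ : E → ℝ) (Φ' : E → E)
    (hdiff : ∀ x, HasGradientAt Φ (Φ' x) x)
    (β : ℝ) (hβ : 0 < β)
    (hlip : LipschitzWith (Real.toNNReal β) Φ') (a b : E) :
    Φ b ≤ Φ a + ⟪Φ' a, b - a⟫ + β / 2 * ‖b - a‖ ^ 2 := by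
  set v := b - a with hv
  set h : ℝ → ℝ := fun t => Φ (a + t • v) - t * ⟪Φ' a, v⟫ - β / 2 * t ^ 2 * ‖v‖ ^ 2 with hh
  have hd : ∀ t : ℝ, HasDerivAt h (⟪Φ' (a + t • v), v⟫ - ⟪Φ' a, v⟫ - β * t * ‖v‖ ^ 2) t := by
    intro t
    have h1 := line_hasDerivAt Φ Φ' hdiff a v t
    have h2 : HasDerivAt (fun t : ℝ => t * ⟪Φ' a, v⟫) ⟪Φ' a, v⟫ t := by
      simpa using (hasDerivAt_id t).mul_const ⟪Φ' a, v⟫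
    have h3 : HasDerivAt (fun t : ℝ => β / 2 * t ^ 2 * ‖v‖ ^ 2) (β * t * ‖v‖ ^ 2) t := by
      have : HasDerivAt (fun t : ℝ => t ^ 2) (2 * t) t := by
        simpa using hasDerivAt_pow 2 t
      have := (this.const_mul (β / 2)).mul_const (‖v‖ ^ 2)
      rw [show β * t * ‖v‖ ^ 2 = β / 2 * (2 * t) * ‖v‖ ^ 2 by ring]
      exact this
    exact (h1.sub h2).sub h3
  have hanti : AntitoneOn h (Set.Icc (0:ℝ) 1) := by
    apply antitoneOn_of_deriv_nonpos (convex_Icc 0 1)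
    · exact fun t _ => (hd t).continuousAt.continuousWithinAt
    · exact fun t _ => ((hd t).differentiableAt).differentiableWithinAt
    · intro t ht
      rw [interior_Icc] at ht
      rw [(hd t).deriv]
      have hb : ⟪Φ' (a + t • v) - Φ' a, v⟫ ≤ β * t * ‖v‖ ^ 2 := by
        calc ⟪Φ' (a + t • v) - Φ' a, v⟫ ≤ ‖Φ' (a + t • v) - Φ' a‖ * ‖v‖ :=
              real_inner_le_norm _ _
          _ ≤ (β * ‖t • v‖) * ‖v‖ := by
              apply mul_le_mul_of_nonneg_right _ (norm_nonneg v)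
              have := hlip.dist_le_mul (a + t • v) a
              simpa [dist_eq_norm, Real.coe_toNNReal β hβ.le] using this
          _ = β * (|t| * ‖v‖) * ‖v‖ := by rw [norm_smul]; simp [Real.norm_eq_abs]
          _ ≤ β * t * ‖v‖ ^ 2 := by
              rw [abs_of_pos ht.1]; ring_nf; exact le_refl _
      have hib : ⟪Φ' (a + t • v) - Φ' a, v⟫ = ⟪Φ' (a + t • v), v⟫ - ⟪Φ' a, v⟫ :=
        inner_sub_left _ _ _
      linarith [hib ▸ hb]
  have := hanti (Set.left_mem_Icc.2 zero_le_one) (Set.right_mem_Icc.2 zero_le_one) zero_le_one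
  simp only [hh] at this
  simp only [zero_smul, add_zero, one_smul] at this
  have hab : a + v = b := by rw [hv]; abel
  rw [hab] at this
  nlinarith [this]

lemma proj_vi {C : Set E} (hCcv : Convex ℝ C)
    (P : E → E) (hP : ∀ x, P x ∈ C ∧ ∀ q ∈ C, ‖x - P x‖ ≤ ‖x - q‖)
    (x : E) {q : E} (hq : q ∈ C) :
    ⟪x - P x, q - P x⟫ ≤ 0 := by
  haveI : Nonempty C := ⟨⟨P x, (hP x).1⟩⟩
  have hnorm : ‖x - P x‖ = ⨅ w : C, ‖x - w‖ := by
    apply le_antisymm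
    · exact le_ciInf fun w => (hP x).2 w w.2
    · exact ciInf_le ⟨0, by rintro r ⟨w, rfl⟩; positivity⟩ (⟨P x, (hP x).1⟩ : C)
  exact ((norm_eq_iInf_iff_real_inner_le_zero hCcv (hP x).1).1 hnorm) q hq

lemma key_step (Φ : E → ℝ) (Φ' : E → E)
    (hconv : ConvexOn ℝ Set.univ Φ)
    (hdiff : ∀ x, HasGradientAt Φ (Φ' x) x)
    (β : ℝ) (hβ : 0 < β)
    (hlip : LipschitzWith (Real.toNNReal β) Φ')
    {C : Set E} (hCcv : Convex ℝ C)
    (P : E → E) (hP : ∀ x, P x ∈ C ∧ ∀ q ∈ C, ‖x - P x‖ ≤ ‖x - q‖)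
    (y : E) (t : ℝ) (ht : 0 < t) {q : E} (hq : q ∈ C) :
    2 * t * (Φ (P (y - t • Φ' y)) - Φ q) ≤
      ‖y - q‖ ^ 2 - ‖P (y - t • Φ' y) - q‖ ^ 2
        + (β * t - 1) * ‖P (y - t • Φ' y) - y‖ ^ 2 := by
  set g := Φ' y with hg
  set x := P (y - t • g) with hx
  have hvi := proj_vi hCcv P hP (y - t • g) hq
  rw [← hx] at hvi
  have hvi' : t * ⟪g, x - q⟫ ≤ ⟪y - x, x - q⟫ := by
    have h1 : ⟪y - t • g - x, q - x⟫ = -⟪y - x, x - q⟫ + t * ⟪g, x - q⟫ := by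
      rw [show y - t • g - x = (y - x) - t • g from by abel, inner_sub_left,
        real_inner_smul_left, show q - x = -(x - q) from by abel, inner_neg_right,
        inner_neg_right]
      ring
    rw [h1] at hvi
    linarith
  have hA : ⟪g, q - y⟫ ≤ Φ q - Φ y := grad_convex_ineq Φ Φ' hconv hdiff y q
  have hB : Φ x ≤ Φ y + ⟪g, x - y⟫ + β / 2 * ‖x - y‖ ^ 2 :=
    descent_lemma Φ Φ' hdiff β hβ hlip y x
  have hsplit : ⟪g, x - y⟫ = ⟪g, x - q⟫ + ⟪g, q - y⟫ := by
    rw [← inner_add_right]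
    congr 1
    abel
  have hnormid : ‖y - q‖ ^ 2 = ‖y - x‖ ^ 2 + 2 * ⟪y - x, x - q⟫ + ‖x - q‖ ^ 2 := by
    have := norm_add_sq_real (y - x) (x - q)
    rw [show (y - x) + (x - q) = y - q from by abel] at this
    exact this
  have hrev : ‖y - x‖ ^ 2 = ‖x - y‖ ^ 2 := by rw [norm_sub_rev]
  have hq1 : Φ x - Φ q ≤ ⟪g, x - q⟫ + β / 2 * ‖x - y‖ ^ 2 := by linarith
  have hq2 : 2 * t * (Φ x - Φ q) ≤ 2 * t * (⟪g, x - q⟫ + β / 2 * ‖x - y‖ ^ 2) :=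
    mul_le_mul_of_nonneg_left hq1 (by positivity)
  nlinarith [hq2, hvi', hnormid, hrev]


end Aux

set_option maxHeartbeats 1000000 in
/-- **O(1/n) rate of the exact projection-gradient method** (Proposition 2 of the paper).
For the error-free projection-gradient iteration `w_{n+1} = P_C (w_n - γ_n ∇Φ(w_n))`,
there is `ϑ > 0` with `Φ(w_{n+1}) - inf_{w ∈ C} Φ(w) ≤ ϑ / (n+1)` for all `n`. -/
theorem stmt_1
    (d : ℕ) (Φ : EuclideanSpace ℝ (Fin d) → ℝ)
    (Φ' : EuclideanSpace ℝ (Fin d) → EuclideanSpace ℝ (Fin d))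
    (hconv : ConvexOn ℝ Set.univ Φ)
    (hdiff : ∀ x, HasGradientAt Φ (Φ' x) x)
    (β : ℝ) (hβ : 0 < β)
    (hlip : LipschitzWith (Real.toNNReal β) Φ')
    (C : Set (EuclideanSpace ℝ (Fin d)))
    (hCne : C.Nonempty) (hCcl : IsClosed C) (hCcv : Convex ℝ C)
    (hmin : ∃ u ∈ C, ∀ v ∈ C, Φ u ≤ Φ v)
    (P : EuclideanSpace ℝ (Fin d) → EuclideanSpace ℝ (Fin d))
    (hP : ∀ x, P x ∈ C ∧ ∀ q ∈ C, ‖x - P x‖ ≤ ‖x - q‖)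
    (γ : ℕ → ℝ) (hγ : ∀ n, 0 < γ n)
    (hγinf : ∃ ε > 0, ∀ n, ε ≤ γ n)
    (hγsup : ∃ δ, δ < 2 / β ∧ ∀ n, γ n ≤ δ)
    (w : ℕ → EuclideanSpace ℝ (Fin d))
    (hrec : ∀ n, w (n + 1) = P (w n - γ n • Φ' (w n))) :
    ∃ ϑ > (0 : ℝ), ∀ n : ℕ, Φ (w (n + 1)) - sInf (Φ '' C) ≤ ϑ / (n + 1) := by
  obtain ⟨u, huC, humin⟩ := hmin
  obtain ⟨ε, hε, hεle⟩ := hγinf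
  obtain ⟨δ, hδlt, hδge⟩ := hγsup
  have hδpos : 0 < δ := lt_of_lt_of_le (hγ 0) (hδge 0)
  have hβδ : β * δ < 2 := by
    rw [lt_div_iff₀ hβ] at hδlt; linarith
  have hsinf : sInf (Φ '' C) = Φ u := by
    apply le_antisymm
    · exact csInf_le ⟨Φ u, by rintro r ⟨v, hv, rfl⟩; exact humin v hv⟩ ⟨u, huC, rfl⟩
    · exact le_csInf ⟨Φ u, u, huC, rfl⟩ (by rintro r ⟨v, hv, rfl⟩; exact humin v hv)
  -- the master per-step inequality
  have key : ∀ (k : ℕ) {q : EuclideanSpace ℝ (Fin d)}, q ∈ C →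
      2 * γ k * (Φ (w (k + 1)) - Φ q) ≤
        ‖w k - q‖ ^ 2 - ‖w (k + 1) - q‖ ^ 2 + (β * γ k - 1) * ‖w (k + 1) - w k‖ ^ 2 := by
    intro k q hq
    have := key_step Φ Φ' hconv hdiff β hβ hlip hCcv P hP (w k) (γ k) (hγ k) hq
    rw [← hrec k] at this
    exact this
  have hwC : ∀ k, w (k + 1) ∈ C := fun k => by rw [hrec k]; exact (hP _).1
  have henn : ∀ k, 0 ≤ Φ (w (k + 1)) - Φ u := fun k => sub_nonneg.2 (humin _ (hwC k))
  -- monotone decrease from index 1 on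
  have hdec : ∀ k, Φ (w (k + 2)) ≤ Φ (w (k + 1)) := by
    intro k
    have h1 := key (k + 1) (hwC k)
    have h0 : ‖w (k + 1) - w (k + 1)‖ ^ 2 = 0 := by simp
    have hrev : ‖w (k + 1 + 1) - w (k + 1)‖ ^ 2 = ‖w (k + 2) - w (k + 1)‖ ^ 2 := rfl
    have hS : (0 : ℝ) ≤ ‖w (k + 2) - w (k + 1)‖ ^ 2 := sq_nonneg _
    have hγk := hγ (k + 1)
    have hγδ := hδge (k + 1)
    nlinarith [mul_nonneg (show (0:ℝ) ≤ 2 - β * γ (k+1) by nlinarith) hS]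
  have hanti : Antitone (fun k => Φ (w (k + 1))) :=
    antitone_nat_of_succ_le fun k => hdec k
  set c : ℝ := max ((β * δ - 1) / (2 - β * δ)) 0 with hcdef
  have hc0 : 0 ≤ c := le_max_right _ _
  have hc2 : β * δ - 1 ≤ c * (2 - β * δ) := by
    have h1 : (β * δ - 1) / (2 - β * δ) ≤ c := le_max_left _ _
    rw [div_le_iff₀ (by linarith)] at h1
    linarith
  -- uniform per-step inequality
  have step2 : ∀ k : ℕ,
      2 * ε * (Φ (w (k + 2)) - Φ u) ≤
        (‖w (k + 1) - u‖ ^ 2 - ‖w (k + 2) - u‖ ^ 2)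
          + 2 * δ * c * (Φ (w (k + 1)) - Φ (w (k + 2))) := by
    intro k
    have h1 := key (k + 1) huC
    have h2 := key (k + 1) (hwC k)
    have h0 : ‖w (k + 1) - w (k + 1)‖ ^ 2 = 0 := by simp
    have hS : (0 : ℝ) ≤ ‖w (k + 2) - w (k + 1)‖ ^ 2 := sq_nonneg _
    have hγk := hγ (k + 1)
    have hγδ := hδge (k + 1)
    have hγε := hεle (k + 1)
    have hX := henn (k + 1)
    have hD : 0 ≤ Φ (w (k + 1)) - Φ (w (k + 2)) := sub_nonneg.2 (hdec k)
    -- decrease inequality: (2 - βγ) S ≤ 2γ D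
    have hdecS : (2 - β * γ (k + 1)) * ‖w (k + 2) - w (k + 1)‖ ^ 2
        ≤ 2 * γ (k + 1) * (Φ (w (k + 1)) - Φ (w (k + 2))) := by
      nlinarith [h2]
    have hcoef : β * γ (k + 1) - 1 ≤ c * (2 - β * γ (k + 1)) := by
      nlinarith [mul_nonneg (mul_nonneg hc0 hβ.le) (sub_nonneg.2 hγδ)]
    have h3 : (β * γ (k + 1) - 1) * ‖w (k + 2) - w (k + 1)‖ ^ 2
        ≤ c * ((2 - β * γ (k + 1)) * ‖w (k + 2) - w (k + 1)‖ ^ 2) := by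
      have := mul_le_mul_of_nonneg_right hcoef hS
      nlinarith [this]
    have h4 : c * ((2 - β * γ (k + 1)) * ‖w (k + 2) - w (k + 1)‖ ^ 2)
        ≤ c * (2 * γ (k + 1) * (Φ (w (k + 1)) - Φ (w (k + 2)))) :=
      mul_le_mul_of_nonneg_left hdecS hc0
    have h5 : c * (2 * γ (k + 1) * (Φ (w (k + 1)) - Φ (w (k + 2))))
        ≤ 2 * δ * c * (Φ (w (k + 1)) - Φ (w (k + 2))) := by
      nlinarith [mul_nonneg (mul_nonneg hc0 hD) (sub_nonneg.2 hγδ)]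
    have hlhs : 2 * ε * (Φ (w (k + 2)) - Φ u) ≤ 2 * γ (k + 1) * (Φ (w (k + 2)) - Φ u) := by
      nlinarith [mul_nonneg hX (sub_nonneg.2 hγε)]
    linarith [h1]
  -- summation
  set K : ℝ := ‖w 1 - u‖ ^ 2 + 2 * δ * c * (Φ (w 1) - Φ u) with hKdef
  have hK0 : 0 ≤ K := by
    have := henn 0
    have : 0 ≤ 2 * δ * c * (Φ (w 1) - Φ u) := by positivity
    positivity
  have sumstep : ∀ n : ℕ,
      2 * ε * (∑ j ∈ Finset.range n, (Φ (w (j + 2)) - Φ u)) ≤ K := by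
    intro n
    have hsum := Finset.sum_le_sum (fun j (_ : j ∈ Finset.range n) => step2 j)
    have t1 : ∑ j ∈ Finset.range n, (‖w (j + 1) - u‖ ^ 2 - ‖w (j + 2) - u‖ ^ 2)
        = ‖w 1 - u‖ ^ 2 - ‖w (n + 1) - u‖ ^ 2 := by
      simpa using Finset.sum_range_sub' (fun j => ‖w (j + 1) - u‖ ^ 2) n
    have t2 : ∑ j ∈ Finset.range n, (Φ (w (j + 1)) - Φ (w (j + 2)))
        = Φ (w 1) - Φ (w (n + 1)) := by
      simpa using Finset.sum_range_sub' (fun j => Φ (w (j + 1))) n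
    rw [← Finset.mul_sum] at hsum
    rw [Finset.sum_add_distrib, t1, ← Finset.mul_sum, t2] at hsum
    have hlast : 0 ≤ ‖w (n + 1) - u‖ ^ 2 := sq_nonneg _
    have hlast2 : 0 ≤ 2 * δ * c * (Φ (w (n + 1)) - Φ u) := by
      have := henn n; positivity
    nlinarith [hsum]
  have lower : ∀ n : ℕ, (n : ℝ) * (Φ (w (n + 1)) - Φ u)
      ≤ ∑ j ∈ Finset.range n, (Φ (w (j + 2)) - Φ u) := by
    intro n
    have := Finset.card_nsmul_le_sum (Finset.range n)
      (fun j => Φ (w (j + 2)) - Φ u) (Φ (w (n + 1)) - Φ u)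
      (fun j hj => by
        have hj' : j + 1 ≤ n := Finset.mem_range.1 hj
        have := hanti (show j + 1 ≤ n from hj')
        simpa using sub_le_sub_right this (Φ u))
    simpa [nsmul_eq_mul] using this
  have hθpos : 0 < K / ε + (Φ (w 1) - Φ u) + 1 := by
    have h01 := henn 0
    have : 0 ≤ K / ε := by positivity
    linarith
  refine ⟨K / ε + (Φ (w 1) - Φ u) + 1, hθpos, ?_⟩
  intro n
  rw [hsinf]
  have he1 := henn 0
  match n with
  | 0 =>
    have : ((0:ℕ) : ℝ) + 1 = 1 := by norm_num
    rw [this, div_one]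
    have : 0 ≤ K / ε := by positivity
    linarith
  | (m + 1) =>
    have hN : (0:ℝ) < ((m+1:ℕ) : ℝ) + 1 := by positivity
    rw [le_div_iff₀ hN]
    have hsum := sumstep (m + 1)
    have hlow := lower (m + 1)
    have hmul : 2 * ε * (((m+1:ℕ):ℝ) * (Φ (w (m + 2)) - Φ u)) ≤ K := by
      have := mul_le_mul_of_nonneg_left hlow (by positivity : (0:ℝ) ≤ 2 * ε)
      linarith
    have heN := henn (m + 1)
    have hKε : ε * (K / ε) = K := by field_simp
    have hem : 0 ≤ (Φ (w (m + 2)) - Φ u) * (m : ℝ) :=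
      mul_nonneg heN (Nat.cast_nonneg m)
    have hcast : ((m+1:ℕ):ℝ) = (m:ℝ) + 1 := by push_cast; ring
    rw [hcast] at hmul ⊢
    nlinarith [hmul, mul_nonneg hε.le hem, mul_nonneg hε.le he1]
end

section
/- Let φ: ℝ^d → ℝ be a convex function, let η ∈ ℝ be such that C = {p ∈ ℝ^d : φ(p) ≤ η} is nonempty, and let p₀ ∈ ℝ^d. Consider the sequence defined as follows: given p_k, if φ(p_k) ≤ η the process terminates; otherwise choose a subgradient s_k of φ at p_k, set p_{k+1/2} = p_k + ((η − φ(p_k))/‖s_k‖²)·s_k, and set p_{k+1} = Q(p₀, p_k, p_{k+1/2}), the projection of p₀ onto H(p₀,p_k) ∩ H(p_k,p_{k+1/2}). Then either the process terminates after finitely many steps at a point p_k with p_k = P_C(p₀), or it generates an infinite sequence (p_k) converging to P_C(p₀). -/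
open Filter Topology

/-- The closed affine half-space `H(x,y) = {p : ⟪p - y, x - y⟫ ≤ 0}`. -/
def halfSpace {d : ℕ} (x y : EuclideanSpace ℝ (Fin d)) : Set (EuclideanSpace ℝ (Fin d)) :=
  {p | (inner ℝ (p - y) (x - y) : ℝ) ≤ 0}

lemma halfSpace_convex {d : ℕ} (x y : EuclideanSpace ℝ (Fin d)) :
    Convex ℝ (halfSpace x y) := by
  intro a ha b hb sc t hsc ht hst
  simp only [halfSpace, Set.mem_setOf_eq] at *
  have h1 : (sc • a + t • b) - y = sc • (a - y) + t • (b - y) := by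
    have : (1:ℝ) • y = y := one_smul ℝ y
    rw [smul_sub, smul_sub]
    rw [show sc • a - sc • y + (t • b - t • y) = sc • a + t • b - (sc • y + t • y) by abel,
      ← add_smul, hst, one_smul]
  rw [h1, inner_add_left, real_inner_smul_left, real_inner_smul_left]
  nlinarith

lemma varineq {d : ℕ} {K : Set (EuclideanSpace ℝ (Fin d))} (hK : Convex ℝ K)
    {u m : EuclideanSpace ℝ (Fin d)} (hm : m ∈ K)
    (hmin : ∀ q ∈ K, ‖u - m‖ ≤ ‖u - q‖) :
    ∀ q ∈ K, (inner ℝ (u - m) (q - m) : ℝ) ≤ 0 := by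
  haveI : Nonempty K := ⟨⟨m, hm⟩⟩
  apply (norm_eq_iInf_iff_real_inner_le_zero hK hm).mp
  apply le_antisymm
  · exact le_ciInf fun w => hmin w w.2
  · have hbdd : BddBelow (Set.range fun w : K => ‖u - (w : EuclideanSpace ℝ (Fin d))‖) :=
      ⟨0, by rintro _ ⟨w, rfl⟩; exact norm_nonneg _⟩
    exact ciInf_le hbdd ⟨m, hm⟩

lemma proj_unique {d : ℕ} {K : Set (EuclideanSpace ℝ (Fin d))} (hK : Convex ℝ K)
    {u m₁ m₂ : EuclideanSpace ℝ (Fin d)} (h₁ : m₁ ∈ K) (h₂ : m₂ ∈ K)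
    (hmin₁ : ∀ q ∈ K, ‖u - m₁‖ ≤ ‖u - q‖) (hmin₂ : ∀ q ∈ K, ‖u - m₂‖ ≤ ‖u - q‖) :
    m₁ = m₂ := by
  have i₁ := varineq hK h₁ hmin₁ m₂ h₂
  have i₂ := varineq hK h₂ hmin₂ m₁ h₁
  have key : (inner ℝ (m₂ - m₁) (m₂ - m₁) : ℝ) ≤ 0 := by
    have e : m₂ - m₁ = (u - m₁) - (u - m₂) := by abel
    nth_rewrite 1 [e]
    rw [inner_sub_left]
    have : (inner ℝ (u - m₂) (m₂ - m₁) : ℝ) = -(inner ℝ (u - m₂) (m₁ - m₂) : ℝ) := by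
      rw [← inner_neg_right]; congr 1; abel
    rw [this]
    linarith
  have := real_inner_self_nonpos.mp key
  have : m₂ = m₁ := by rwa [sub_eq_zero] at this
  exact this.symm

/-- **Convergence of the outer-approximation projection scheme** (Proposition 3 of the paper).
To project `p₀` onto `C = {p : φ(p) ≤ η}` (`φ` convex, `C ≠ ∅`): given `p_k`, if `φ(p_k) ≤ η`
the process terminates; otherwise, with `s_k ∈ ∂φ(p_k)` and the subgradient projection
`p_{k+1/2} = p_k + ((η - φ(p_k))/‖s_k‖²) s_k`, the next iterate `p_{k+1}` is the projection of
`p₀` onto `H(p₀,p_k) ∩ H(p_k,p_{k+1/2})`. Then either the process terminates after finitely many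
steps at `P_C(p₀)`, or it generates an infinite sequence converging to `P_C(p₀)`. -/
theorem stmt_3
    (d : ℕ) (φ : EuclideanSpace ℝ (Fin d) → ℝ)
    (hφ : ConvexOn ℝ Set.univ φ) (η : ℝ)
    (C : Set (EuclideanSpace ℝ (Fin d))) (hC : C = {p | φ p ≤ η}) (hCne : C.Nonempty)
    (p₀ : EuclideanSpace ℝ (Fin d))
    (PC : EuclideanSpace ℝ (Fin d))
    (hPC : PC ∈ C ∧ ∀ q ∈ C, ‖p₀ - PC‖ ≤ ‖p₀ - q‖)
    (p s : ℕ → EuclideanSpace ℝ (Fin d))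
    (hp0 : p 0 = p₀)
    (hs : ∀ k, η < φ (p k) →
      ∀ y, (inner ℝ (y - p k) (s k) : ℝ) + φ (p k) ≤ φ y)
    (hrec : ∀ k, η < φ (p k) →
      p (k + 1) ∈
          halfSpace p₀ (p k) ∩
            halfSpace (p k) (p k + ((η - φ (p k)) / ‖s k‖ ^ 2) • s k) ∧
        ∀ q ∈ halfSpace p₀ (p k) ∩
            halfSpace (p k) (p k + ((η - φ (p k)) / ‖s k‖ ^ 2) • s k),
          ‖p₀ - p (k + 1)‖ ≤ ‖p₀ - q‖) :
    (∃ k, (∀ j < k, η < φ (p j)) ∧ φ (p k) ≤ η ∧ p k = PC) ∨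
      ((∀ k, η < φ (p k)) ∧ Tendsto p atTop (𝓝 PC)) := by
  classical
  have hconv : Convex ℝ C := by
    rw [hC]
    simpa using hφ.convex_le η
  -- subgradient facts
  have hsfact : ∀ k, η < φ (p k) →
      s k ≠ 0 ∧ ∀ q ∈ C, (inner ℝ (q - p k) (s k) : ℝ) ≤ η - φ (p k) := by
    intro k hk
    have hle : ∀ q ∈ C, (inner ℝ (q - p k) (s k) : ℝ) ≤ η - φ (p k) := by
      intro q hq
      have h1 := hs k hk q
      have h2 : φ q ≤ η := by rw [hC] at hq; exact hq
      linarith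
    refine ⟨?_, hle⟩
    obtain ⟨q₀, hq₀⟩ := hCne
    intro hzero
    have := hle q₀ hq₀
    rw [hzero, inner_zero_right] at this
    linarith
  -- C sits in the second half-space
  have hCsubmid : ∀ k, η < φ (p k) →
      C ⊆ halfSpace (p k) (p k + ((η - φ (p k)) / ‖s k‖ ^ 2) • s k) := by
    intro k hk q hq
    obtain ⟨hne, hle⟩ := hsfact k hk
    have hnp : (0:ℝ) < ‖s k‖ := norm_pos_iff.mpr hne
    have hns : (0:ℝ) < ‖s k‖ ^ 2 := by positivity
    set t : ℝ := (η - φ (p k)) / ‖s k‖ ^ 2 with ht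
    have htneg : t < 0 := div_neg_of_neg_of_pos (by linarith) hns
    have hts : t * ‖s k‖ ^ 2 = η - φ (p k) := by rw [ht]; field_simp
    clear_value t
    simp only [halfSpace, Set.mem_setOf_eq]
    have e1 : q - (p k + t • s k) = (q - p k) - t • s k := by abel
    have e2 : p k - (p k + t • s k) = -(t • s k) := by abel
    have hsm : (inner ℝ (q - p k - t • s k) (-(t • s k)) : ℝ)
        = -t * (inner ℝ (q - p k) (s k) : ℝ) + t ^ 2 * ‖s k‖ ^ 2 := by
      simp only [inner_neg_right, inner_sub_left, real_inner_smul_left,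
        real_inner_smul_right, real_inner_self_eq_norm_sq, norm_smul, mul_pow, Real.norm_eq_abs, sq_abs]
      ring
    rw [e1, e2, hsm]
    have hq' := hle q hq
    have hq'' : (inner ℝ (q - p k) (s k) : ℝ) ≤ t * ‖s k‖ ^ 2 := by rw [hts]; exact hq'
    have hprod : (0:ℝ) ≤ (-t) * (t * ‖s k‖ ^ 2 - inner ℝ (q - p k) (s k)) :=
      mul_nonneg (neg_nonneg.mpr htneg.le) (sub_nonneg.mpr hq'')
    nlinarith [hprod]
  -- main invariant
  have inv : ∀ k, (∀ j < k, η < φ (p j)) →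
      C ⊆ halfSpace p₀ (p k) ∧ ∀ q ∈ C, ‖p₀ - p k‖ ≤ ‖p₀ - q‖ := by
    intro k
    induction k with
    | zero =>
      intro _
      constructor
      · intro q hq
        simp [halfSpace, hp0]
      · intro q hq
        rw [hp0]
        simp
    | succ k ih =>
      intro h
      have hk : η < φ (p k) := h k (Nat.lt_succ_self k)
      obtain ⟨ih1, _⟩ := ih fun j hj => h j (hj.trans (Nat.lt_succ_self k))
      obtain ⟨hmem, hmin⟩ := hrec k hk
      have hCD : C ⊆ halfSpace p₀ (p k) ∩
          halfSpace (p k) (p k + ((η - φ (p k)) / ‖s k‖ ^ 2) • s k) :=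
        Set.subset_inter ih1 (hCsubmid k hk)
      have hDconv : Convex ℝ (halfSpace p₀ (p k) ∩
          halfSpace (p k) (p k + ((η - φ (p k)) / ‖s k‖ ^ 2) • s k)) :=
        (halfSpace_convex _ _).inter (halfSpace_convex _ _)
      refine ⟨?_, fun q hq => hmin q (hCD hq)⟩
      intro q hq
      have hvi := varineq hDconv hmem hmin q (hCD hq)
      simp only [halfSpace, Set.mem_setOf_eq]
      rwa [real_inner_comm]
  by_cases hterm : ∃ k, φ (p k) ≤ η
  · left
    refine ⟨Nat.find hterm, fun j hj => lt_of_not_ge (Nat.find_min hterm hj),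
      Nat.find_spec hterm, ?_⟩
    have hlt : ∀ j < Nat.find hterm, η < φ (p j) :=
      fun j hj => lt_of_not_ge (Nat.find_min hterm hj)
    have hmin := (inv _ hlt).2
    have hpk : p (Nat.find hterm) ∈ C := by rw [hC]; exact Nat.find_spec hterm
    exact proj_unique hconv hpk hPC.1 hmin hPC.2
  · right
    push_neg at hterm
    refine ⟨hterm, ?_⟩
    set R : ℝ := ‖p₀ - PC‖ with hR
    have hRnn : 0 ≤ R := norm_nonneg _
    have hbd : ∀ k, ‖p₀ - p k‖ ≤ R := fun k => (inv k fun j _ => hterm j).2 PC hPC.1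
    -- step inequality
    have hstep : ∀ k, ‖p₀ - p k‖ ^ 2 + ‖p k - p (k + 1)‖ ^ 2 ≤ ‖p₀ - p (k + 1)‖ ^ 2 := by
      intro k
      have hmem := (hrec k (hterm k)).1.1
      simp only [halfSpace, Set.mem_setOf_eq] at hmem
      have e : p₀ - p (k + 1) = (p₀ - p k) - (p (k + 1) - p k) := by abel
      have key := norm_sub_sq_real (p₀ - p k) (p (k + 1) - p k)
      rw [e, key]
      have e2 : ‖p k - p (k + 1)‖ = ‖p (k + 1) - p k‖ := norm_sub_rev _ _
      rw [e2]
      have hcm : (inner ℝ (p₀ - p k) (p (k + 1) - p k) : ℝ)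
          = (inner ℝ (p (k + 1) - p k) (p₀ - p k) : ℝ) := real_inner_comm _ _
      nlinarith [hmem]
    set a : ℕ → ℝ := fun k => ‖p₀ - p k‖ ^ 2 with ha
    have hamono : Monotone a := by
      apply monotone_nat_of_le_succ
      intro k
      show ‖p₀ - p k‖ ^ 2 ≤ ‖p₀ - p (k + 1)‖ ^ 2
      have := hstep k
      nlinarith [sq_nonneg ‖p k - p (k + 1)‖]
    have habd : BddAbove (Set.range a) := by
      refine ⟨R ^ 2, ?_⟩
      rintro _ ⟨k, rfl⟩
      show ‖p₀ - p k‖ ^ 2 ≤ R ^ 2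
      have := hbd k
      nlinarith [norm_nonneg (p₀ - p k)]
    have haconv : Tendsto a atTop (𝓝 (⨆ k, a k)) := tendsto_atTop_ciSup hamono habd
    have hdiff : Tendsto (fun k => a (k + 1) - a k) atTop (𝓝 0) := by
      have := (haconv.comp (tendsto_add_atTop_nat 1)).sub haconv
      simpa using this
    have hd2 : Tendsto (fun k => ‖p k - p (k + 1)‖ ^ 2) atTop (𝓝 0) := by
      apply squeeze_zero (fun k => sq_nonneg _) (fun k => ?_) hdiff
      show ‖p k - p (k + 1)‖ ^ 2 ≤ ‖p₀ - p (k + 1)‖ ^ 2 - ‖p₀ - p k‖ ^ 2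
      have := hstep k
      linarith
    have hd : Tendsto (fun k => ‖p k - p (k + 1)‖) atTop (𝓝 0) := by
      have h1 := (Real.continuous_sqrt.tendsto 0).comp hd2
      simp only [Function.comp_def, Real.sqrt_zero] at h1
      convert h1 using 2 with k
      rw [Real.sqrt_sq (norm_nonneg _)]
    -- continuity of φ
    have hcont : Continuous φ := by
      rw [← continuousOn_univ]
      exact hφ.continuousOn isOpen_univ
    -- bound on subgradients
    obtain ⟨x₀, hx₀mem, hx₀max⟩ := (isCompact_closedBall p₀ (R + 1)).exists_isMaxOn
      ⟨p₀, Metric.mem_closedBall_self (by linarith)⟩ hcont.continuousOn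
    set M : ℝ := φ x₀ with hM
    have hsbd : ∀ k, ‖s k‖ ≤ M - η := by
      intro k
      obtain ⟨hne, _⟩ := hsfact k (hterm k)
      have hns : (0:ℝ) < ‖s k‖ := norm_pos_iff.mpr hne
      set u : EuclideanSpace ℝ (Fin d) := ‖s k‖⁻¹ • s k with hu
      have hun : ‖u‖ = 1 := by
        rw [hu, norm_smul]
        simp [abs_of_pos (inv_pos.mpr hns), inv_mul_cancel₀ hns.ne']
      have hyball : p k + u ∈ Metric.closedBall p₀ (R + 1) := by
        rw [Metric.mem_closedBall]
        calc dist (p k + u) p₀ ≤ dist (p k + u) (p k) + dist (p k) p₀ := dist_triangle _ _ _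
          _ ≤ 1 + R := by
              apply add_le_add
              · rw [dist_eq_norm]; simpa using hun.le
              · rw [dist_eq_norm, ← norm_sub_rev]; exact hbd k
          _ = R + 1 := by ring
      have h1 := hs k (hterm k) (p k + u)
      have h2 : φ (p k + u) ≤ M := hx₀max hyball
      have h3 : (inner ℝ (p k + u - p k) (s k) : ℝ) = ‖s k‖ := by
        have : p k + u - p k = u := by abel
        rw [this, hu, real_inner_smul_left, real_inner_self_eq_norm_sq]
        field_simp
      rw [h3] at h1
      have := hterm k
      linarith
    -- from the second half-space: φ (p k) - η ≤ ‖p k - p (k+1)‖ * (M - η)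
    have hphi : ∀ k, φ (p k) - η ≤ ‖p k - p (k + 1)‖ * (M - η) := by
      intro k
      obtain ⟨hne, _⟩ := hsfact k (hterm k)
      have hnp : (0:ℝ) < ‖s k‖ := norm_pos_iff.mpr hne
      have hns : (0:ℝ) < ‖s k‖ ^ 2 := by positivity
      set t : ℝ := (η - φ (p k)) / ‖s k‖ ^ 2 with ht
      have htneg : t < 0 := div_neg_of_neg_of_pos (by linarith [hterm k]) hns
      have hts : t * ‖s k‖ ^ 2 = η - φ (p k) := by rw [ht]; field_simp
      have hmem := (hrec k (hterm k)).1.2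
      rw [← ht] at hmem
      clear_value t
      simp only [halfSpace, Set.mem_setOf_eq] at hmem
      have e1 : p (k + 1) - (p k + t • s k) = (p (k + 1) - p k) - t • s k := by abel
      have e2 : p k - (p k + t • s k) = -(t • s k) := by abel
      have hsm : (inner ℝ (p (k + 1) - p k - t • s k) (-(t • s k)) : ℝ)
          = -t * (inner ℝ (p (k + 1) - p k) (s k) : ℝ) + t ^ 2 * ‖s k‖ ^ 2 := by
        simp only [inner_neg_right, inner_sub_left, real_inner_smul_left,
          real_inner_smul_right, real_inner_self_eq_norm_sq, norm_smul, mul_pow, Real.norm_eq_abs, sq_abs]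
        ring
      rw [e1, e2, hsm] at hmem
      have hX : (inner ℝ (p (k + 1) - p k) (s k) : ℝ) ≤ η - φ (p k) := by
        rw [← hts]
        by_contra hcon
        push_neg at hcon
        nlinarith [mul_pos (neg_pos.mpr htneg) (sub_pos.mpr hcon)]
      have hY : (inner ℝ (p k - p (k + 1)) (s k) : ℝ)
          = -(inner ℝ (p (k + 1) - p k) (s k) : ℝ) := by
        rw [← inner_neg_left]; congr 1; abel
      have hcs : (inner ℝ (p k - p (k + 1)) (s k) : ℝ) ≤ ‖p k - p (k + 1)‖ * ‖s k‖ :=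
        real_inner_le_norm _ _
      have hsb := hsbd k
      have h1 : φ (p k) - η ≤ ‖p k - p (k + 1)‖ * ‖s k‖ := by
        rw [hY] at hcs; linarith
      calc φ (p k) - η ≤ ‖p k - p (k + 1)‖ * ‖s k‖ := h1
        _ ≤ ‖p k - p (k + 1)‖ * (M - η) :=
            mul_le_mul_of_nonneg_left hsb (norm_nonneg _)
    have hphitend : Tendsto (fun k => φ (p k)) atTop (𝓝 η) := by
      apply tendsto_of_tendsto_of_tendsto_of_le_of_le (g := fun _ => η)
        (h := fun k => η + ‖p k - p (k + 1)‖ * (M - η)) tendsto_const_nhds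
      · have : Tendsto (fun k => η + ‖p k - p (k + 1)‖ * (M - η)) atTop (𝓝 (η + 0 * (M - η))) :=
          tendsto_const_nhds.add (hd.mul tendsto_const_nhds)
        simpa using this
      · intro k
        show η ≤ φ (p k)
        exact (hterm k).le
      · intro k
        show φ (p k) ≤ η + ‖p k - p (k + 1)‖ * (M - η)
        have := hphi k
        linarith
    apply tendsto_of_subseq_tendsto
    intro ns hns
    have hball : ∀ n, p (ns n) ∈ Metric.closedBall p₀ R := by
      intro n
      rw [Metric.mem_closedBall, dist_eq_norm, ← norm_sub_rev]
      exact hbd _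
    obtain ⟨x, hxball, ms, hms, hlim⟩ := (isCompact_closedBall p₀ R).tendsto_subseq hball
    have hxC : x ∈ C := by
      have h1 : Tendsto (fun n => φ (p (ns (ms n)))) atTop (𝓝 η) :=
        hphitend.comp (hns.comp hms.tendsto_atTop)
      have h2 : Tendsto (fun n => φ (p (ns (ms n)))) atTop (𝓝 (φ x)) :=
        (hcont.tendsto x).comp hlim
      have : φ x = η := tendsto_nhds_unique h2 h1
      rw [hC]
      exact this.le
    have hxmin : ∀ q ∈ C, ‖p₀ - x‖ ≤ ‖p₀ - q‖ := by
      intro q hq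
      have h1 : ‖p₀ - x‖ ≤ R := by
        rw [Metric.mem_closedBall, dist_eq_norm, ← norm_sub_rev] at hxball
        exact hxball
      exact h1.trans (hPC.2 q hq)
    have hxPC : x = PC := proj_unique hconv hxC hPC.1 hxmin hPC.2
    exact ⟨ms, hxPC ▸ hlim⟩
end

section
/- For j = 1,…,p, let φ_j: ℝ^d → ℝ be convex, let η_j ∈ ℝ, and let ω_j ∈ (0,1] with Σ_{j=1}^p ω_j = 1. Suppose C = ∩_{j=1}^p {w ∈ ℝ^d : φ_j(w) ≤ η_j} is nonempty, and let p₀ ∈ ℝ^d. Given p_k with p_k ∉ C, for each j choose a subgradient s_{j,k} of φ_j at p_k and set p_{j,k} = p_k + ((η_j − φ_j(p_k))/‖s_{j,k}‖²)·s_{j,k} if φ_j(p_k) > η_j and p_{j,k} = p_k otherwise; set p_{k+1/2} = p_k + L_k(Σ_j ω_j p_{j,k} − p_k) with extrapolation parameter L_k = (Σ_j ω_j ‖p_{j,k} − p_k‖²)/‖Σ_j ω_j p_{j,k} − p_k‖², and set p_{k+1} = Q(p₀, p_k, p_{k+1/2}), the projection of p₀ onto H(p₀,p_k) ∩ H(p_k,p_{k+1/2}).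 If the algorithm does not terminate (p_k ∉ C for all k), then p_k → P_C(p₀). -/
open Filter Topology

variable {E : Type*} [NormedAddCommGroup E] [InnerProductSpace ℝ E]

lemma my_proj_var_ineq {K : Set E} (hK : Convex ℝ K) {p u : E} (hu : u ∈ K)
    (hmin : ∀ v ∈ K, ‖p - u‖ ≤ ‖p - v‖) :
    ∀ v ∈ K, (inner ℝ (v - u) (p - u) : ℝ) ≤ 0 := by
  intro v hv
  have key : ∀ t : ℝ, 0 < t → t ≤ 1 →
      (inner ℝ (v - u) (p - u) : ℝ) ≤ t / 2 * ‖v - u‖ ^ 2 := by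
    intro t ht0 ht1
    have hw : u + t • (v - u) ∈ K := by
      have h := hK hu hv (by linarith : (0:ℝ) ≤ 1 - t) ht0.le (by ring)
      have he : u + t • (v - u) = (1 - t) • u + t • v := by
        rw [smul_sub, sub_smul, one_smul]; abel
      rw [he]; exact h
    have h1 : ‖p - u‖ ≤ ‖p - (u + t • (v - u))‖ := hmin _ hw
    have h2 : ‖p - u‖ ^ 2 ≤ ‖p - (u + t • (v - u))‖ ^ 2 :=
      pow_le_pow_left₀ (norm_nonneg _) h1 2
    have h3 : p - (u + t • (v - u)) = (p - u) - t • (v - u) := by abel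
    have hexp : ‖(p - u) - t • (v - u)‖ ^ 2
        = ‖p - u‖ ^ 2 - 2 * (t * (inner ℝ (p - u) (v - u) : ℝ)) + t ^ 2 * ‖v - u‖ ^ 2 := by
      rw [norm_sub_sq_real, real_inner_smul_right, norm_smul, Real.norm_eq_abs,
        abs_of_pos ht0, mul_pow]
    rw [h3, hexp] at h2
    have := real_inner_comm (v - u) (p - u)
    nlinarith
  by_cases hvu : v = u
  · simp [hvu]
  · have hb : 0 < ‖v - u‖ ^ 2 := pow_pos (norm_sub_pos_iff.mpr hvu) 2
    by_contra h
    push_neg at h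
    set I := (inner ℝ (v - u) (p - u) : ℝ) with hI
    have ht : 0 < min 1 (I / ‖v - u‖ ^ 2) := by
      have : 0 < I / ‖v - u‖ ^ 2 := div_pos h hb
      simp [this]
    have hk := key _ ht (min_le_left _ _)
    have h5 : min 1 (I / ‖v - u‖ ^ 2) ≤ I / ‖v - u‖ ^ 2 := min_le_right _ _
    have h6 : (I / ‖v - u‖ ^ 2) / 2 * ‖v - u‖ ^ 2 = I / 2 := by
      field_simp; exact div_self (norm_ne_zero_iff.mpr (sub_ne_zero.mpr hvu))
    nlinarith

lemma my_halfSpace_convex (x y : E) :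
    Convex ℝ {p : E | (inner ℝ (p - y) (x - y) : ℝ) ≤ 0} := by
  intro p1 h1 p2 h2 a b ha hb hab
  simp only [Set.mem_setOf_eq] at *
  have hb1 : b = 1 - a := by linarith
  subst hb1
  have he : (a • p1 + (1 - a) • p2) - y = a • (p1 - y) + (1 - a) • (p2 - y) := by
    module
  rw [he, inner_add_left, real_inner_smul_left, real_inner_smul_left]
  nlinarith

lemma my_sqrt_tendsto {f : ℕ → ℝ} (h0 : ∀ n, 0 ≤ f n)
    (h : Tendsto (fun n => f n ^ 2) atTop (𝓝 0)) : Tendsto f atTop (𝓝 0) := by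
  have h1 := (Real.continuous_sqrt.tendsto 0).comp h
  simp only [Function.comp_def, Real.sqrt_zero] at h1
  exact h1.congr fun n => Real.sqrt_sq (h0 n)

set_option maxHeartbeats 4000000 in
/-- **Outer-approximation projection with multiple constraints** (Appendix A of the paper).
With `C = ⋂ⱼ {w : φⱼ(w) ≤ ηⱼ}` nonempty, subgradient projections `p_{j,k}`, weights `ωⱼ`,
extrapolation `L_k`, `p_{k+1/2} = p_k + L_k (Σⱼ ωⱼ p_{j,k} - p_k)` and `p_{k+1}` the projection
of `p₀` onto `H(p₀,p_k) ∩ H(p_k,p_{k+1/2})`: if `p_k ∉ C` for all `k`, then `p_k → P_C(p₀)`. -/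
theorem stmt_4
    (d np : ℕ) (φ : Fin np → EuclideanSpace ℝ (Fin d) → ℝ)
    (hφ : ∀ j, ConvexOn ℝ Set.univ (φ j))
    (η : Fin np → ℝ) (ω : Fin np → ℝ)
    (hω : ∀ j, ω j ∈ Set.Ioc (0 : ℝ) 1) (hωsum : ∑ j, ω j = 1)
    (C : Set (EuclideanSpace ℝ (Fin d)))
    (hC : C = ⋂ j, {w | φ j w ≤ η j}) (hCne : C.Nonempty)
    (p₀ : EuclideanSpace ℝ (Fin d))
    (PC : EuclideanSpace ℝ (Fin d))
    (hPC : PC ∈ C ∧ ∀ v ∈ C, ‖p₀ - PC‖ ≤ ‖p₀ - v‖)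
    (q : ℕ → EuclideanSpace ℝ (Fin d)) (hq0 : q 0 = p₀)
    (hqC : ∀ k, q k ∉ C)
    (s : Fin np → ℕ → EuclideanSpace ℝ (Fin d))
    (hs : ∀ j k, ∀ y, (inner ℝ (y - q k) (s j k) : ℝ) + φ j (q k) ≤ φ j y)
    (pj : Fin np → ℕ → EuclideanSpace ℝ (Fin d))
    (hpj : ∀ j k, pj j k =
      if η j < φ j (q k) then q k + ((η j - φ j (q k)) / ‖s j k‖ ^ 2) • s j k else q k)
    (L : ℕ → ℝ)
    (hL : ∀ k, L k =
      (∑ j, ω j * ‖pj j k - q k‖ ^ 2) / ‖(∑ j, ω j • pj j k) - q k‖ ^ 2)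
    (qh : ℕ → EuclideanSpace ℝ (Fin d))
    (hqh : ∀ k, qh k = q k + L k • ((∑ j, ω j • pj j k) - q k))
    (hrec : ∀ k,
      q (k + 1) ∈ halfSpace p₀ (q k) ∩ halfSpace (q k) (qh k) ∧
        ∀ v ∈ halfSpace p₀ (q k) ∩ halfSpace (q k) (qh k),
          ‖p₀ - q (k + 1)‖ ≤ ‖p₀ - v‖) :
    Tendsto q atTop (𝓝 PC) := by
  classical
  obtain ⟨c0, hc0⟩ := hCne
  obtain ⟨hPCmem, hPCmin⟩ := hPC
  have hωpos : ∀ j, 0 < ω j := fun j => (hω j).1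
  have hmemC : ∀ c ∈ C, ∀ j, φ j c ≤ η j := by
    intro c hc j
    rw [hC] at hc
    exact Set.mem_iInter.mp hc j
  obtain ⟨M, hMdef⟩ : ∃ M : ℕ → EuclideanSpace ℝ (Fin d),
      ∀ k, M k = ∑ j, ω j • pj j k := ⟨_, fun _ => rfl⟩
  obtain ⟨A, hAdef⟩ : ∃ A : ℕ → ℝ,
      ∀ k, A k = ∑ j, ω j * ‖pj j k - q k‖ ^ 2 := ⟨_, fun _ => rfl⟩
  have hL' : ∀ k, L k = A k / ‖M k - q k‖ ^ 2 := by
    intro k; rw [hL k, hAdef, hMdef]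
  have hqh' : ∀ k, qh k = q k + L k • (M k - q k) := by
    intro k; rw [hqh k, hMdef]
  -- subgradients at active constraints are nonzero
  have hsne : ∀ j k, η j < φ j (q k) → s j k ≠ 0 := by
    intro j k hjk h0
    have h1 := hs j k c0
    rw [h0, inner_zero_right] at h1
    have h2 := hmemC c0 hc0 j
    linarith
  -- F1 : key subgradient projection inequality
  have hsub : ∀ j k, ∀ c ∈ C,
      ‖pj j k - q k‖ ^ 2 ≤ (inner ℝ (c - q k) (pj j k - q k) : ℝ) := by
    intro j k c hc
    by_cases hact : η j < φ j (q k)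
    · have hpjk : pj j k - q k = ((η j - φ j (q k)) / ‖s j k‖ ^ 2) • s j k := by
        rw [hpj j k, if_pos hact]; abel
      have hcs : (inner ℝ (c - q k) (s j k) : ℝ) ≤ η j - φ j (q k) := by
        have h1 := hs j k c
        have h2 := hmemC c hc j
        linarith
      have hs0 := hsne j k hact
      have hsn : (0:ℝ) < ‖s j k‖ ^ 2 := pow_pos (norm_pos_iff.mpr hs0) 2
      have hepos : η j - φ j (q k) < 0 := by linarith
      rw [hpjk, real_inner_smul_right, norm_smul, Real.norm_eq_abs, mul_pow, sq_abs]
      have hsq : ((η j - φ j (q k)) / ‖s j k‖ ^ 2) ^ 2 * ‖s j k‖ ^ 2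
          = ((η j - φ j (q k)) / ‖s j k‖ ^ 2) * (η j - φ j (q k)) := by
        field_simp
      rw [hsq]
      have hdiv : (η j - φ j (q k)) / ‖s j k‖ ^ 2 < 0 := div_neg_of_neg_of_pos hepos hsn
      nlinarith
    · have hpq : pj j k = q k := by rw [hpj j k, if_neg hact]
      simp [hpq]
  -- decomposition of M k - q k
  have hMq : ∀ k, M k - q k = ∑ j, ω j • (pj j k - q k) := by
    intro k
    rw [hMdef k]
    rw [Finset.sum_congr rfl (fun j _ => smul_sub (ω j) (pj j k) (q k)),
      Finset.sum_sub_distrib, ← Finset.sum_smul, hωsum, one_smul]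
  -- F2
  have hukey : ∀ k, ∀ c ∈ C, A k ≤ (inner ℝ (c - q k) (M k - q k) : ℝ) := by
    intro k c hc
    rw [hMq k, inner_sum, hAdef k]
    refine Finset.sum_le_sum fun j _ => ?_
    rw [real_inner_smul_right]
    have h1 := hsub j k c hc
    nlinarith [hωpos j]
  -- F3
  have hact : ∀ k, ∃ j, η j < φ j (q k) := by
    intro k
    by_contra h
    push_neg at h
    exact hqC k (by rw [hC]; exact Set.mem_iInter.mpr fun j => h j)
  have hApos : ∀ k, 0 < A k := by
    intro k
    obtain ⟨j, hj⟩ := hact k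
    have hne : pj j k - q k ≠ 0 := by
      rw [hpj j k, if_pos hj, add_sub_cancel_left]
      exact smul_ne_zero
        (div_ne_zero (by linarith) (ne_of_gt (pow_pos (norm_pos_iff.mpr (hsne j k hj)) 2)))
        (hsne j k hj)
    rw [hAdef k]
    refine Finset.sum_pos' (fun i _ => mul_nonneg (hωpos i).le (sq_nonneg _))
      ⟨j, Finset.mem_univ j, mul_pos (hωpos j) (pow_pos (norm_pos_iff.mpr hne) 2)⟩
  have hune : ∀ k, M k - q k ≠ 0 := by
    intro k h0
    have h1 := hukey k c0 hc0
    rw [h0, inner_zero_right] at h1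
    linarith [hApos k]
  have hLpos : ∀ k, 0 < L k := by
    intro k
    rw [hL' k]
    exact div_pos (hApos k) (pow_pos (norm_pos_iff.mpr (hune k)) 2)
  have hLA : ∀ k, L k * ‖M k - q k‖ ^ 2 = A k := by
    intro k
    rw [hL' k]
    field_simp [pow_ne_zero 2 (norm_ne_zero_iff.mpr (hune k))]
    exact mul_div_cancel_right₀ _ (norm_ne_zero_iff.mpr (hune k))
  -- F6 : C is inside the second half-space
  have hCh2 : ∀ k, C ⊆ halfSpace (q k) (qh k) := by
    intro k c hc
    show (inner ℝ (c - qh k) (q k - qh k) : ℝ) ≤ 0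
    have h1 : c - qh k = (c - q k) - L k • (M k - q k) := by rw [hqh' k]; abel
    have h2 : q k - qh k = -(L k • (M k - q k)) := by rw [hqh' k]; abel
    have e1 : (inner ℝ (c - qh k) (q k - qh k) : ℝ)
        = -(L k * (inner ℝ (c - q k) (M k - q k) : ℝ)) + L k ^ 2 * ‖M k - q k‖ ^ 2 := by
      rw [h1, h2]
      simp only [inner_neg_right, inner_sub_left, real_inner_smul_left,
        real_inner_smul_right, real_inner_self_eq_norm_sq, norm_smul,
        Real.norm_eq_abs, mul_pow, sq_abs]
      ring
    rw [e1]
    have h3 := hukey k c hc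
    have h4 := hLpos k
    have h5 := hLA k
    nlinarith
  -- F8 : C is inside the first half-space, by induction
  have hCh1 : ∀ k, C ⊆ halfSpace p₀ (q k) := by
    intro k
    induction k with
    | zero =>
      intro c hc
      show (inner ℝ (c - q 0) (p₀ - q 0) : ℝ) ≤ 0
      rw [hq0, sub_self, inner_zero_right]
    | succ k ih =>
      intro c hc
      have hDconv : Convex ℝ (halfSpace p₀ (q k) ∩ halfSpace (q k) (qh k)) :=
        (my_halfSpace_convex p₀ (q k)).inter (my_halfSpace_convex (q k) (qh k))
      exact my_proj_var_ineq hDconv (hrec k).1 (hrec k).2 c ⟨ih hc, hCh2 k hc⟩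
  -- boundedness
  set R := ‖p₀ - PC‖ with hR
  have hbound : ∀ k, ‖p₀ - q k‖ ≤ R := by
    intro k
    cases k with
    | zero => rw [hq0]; simp [hR]
    | succ k => exact (hrec k).2 PC ⟨hCh1 k hPCmem, hCh2 k hPCmem⟩
  -- F10
  have hmono : ∀ k, ‖p₀ - q k‖ ^ 2 + ‖q (k+1) - q k‖ ^ 2 ≤ ‖p₀ - q (k+1)‖ ^ 2 := by
    intro k
    have h1 : (inner ℝ (q (k+1) - q k) (p₀ - q k) : ℝ) ≤ 0 := (hrec k).1.1
    have h2 : p₀ - q (k+1) = (p₀ - q k) - (q (k+1) - q k) := by abel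
    have hexp : ‖(p₀ - q k) - (q (k+1) - q k)‖ ^ 2
        = ‖p₀ - q k‖ ^ 2 - 2 * (inner ℝ (p₀ - q k) (q (k+1) - q k) : ℝ)
          + ‖q (k+1) - q k‖ ^ 2 := norm_sub_sq_real _ _
    rw [h2, hexp]
    have h3 := real_inner_comm (q (k+1) - q k) (p₀ - q k)
    linarith
  -- F11 : convergence of the distances
  have haMono : Monotone (fun k => ‖p₀ - q k‖ ^ 2) :=
    monotone_nat_of_le_succ fun k => by nlinarith [hmono k, sq_nonneg ‖q (k+1) - q k‖]
  have haBdd : BddAbove (Set.range fun k => ‖p₀ - q k‖ ^ 2) := by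
    refine ⟨R ^ 2, ?_⟩
    rintro x ⟨k, rfl⟩
    exact pow_le_pow_left₀ (norm_nonneg _) (hbound k) 2
  have hℓ := tendsto_atTop_ciSup haMono haBdd
  have hdiff : Tendsto (fun k => ‖p₀ - q (k+1)‖ ^ 2 - ‖p₀ - q k‖ ^ 2) atTop (𝓝 0) := by
    have h1 := (hℓ.comp (tendsto_add_atTop_nat 1)).sub hℓ
    simpa using h1
  have hδ2 : Tendsto (fun k => ‖q (k+1) - q k‖ ^ 2) atTop (𝓝 0) :=
    squeeze_zero (fun k => sq_nonneg _) (fun k => by nlinarith [hmono k]) hdiff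
  -- F12
  have hAδ : ∀ k, A k ≤ ‖q (k+1) - q k‖ * ‖M k - q k‖ := by
    intro k
    have h1 : (inner ℝ (q (k+1) - qh k) (q k - qh k) : ℝ) ≤ 0 := (hrec k).1.2
    have h2 : q (k+1) - qh k = (q (k+1) - q k) - L k • (M k - q k) := by rw [hqh' k]; abel
    have h3 : q k - qh k = -(L k • (M k - q k)) := by rw [hqh' k]; abel
    have e1 : (inner ℝ (q (k+1) - qh k) (q k - qh k) : ℝ)
        = -(L k * (inner ℝ (q (k+1) - q k) (M k - q k) : ℝ)) + L k ^ 2 * ‖M k - q k‖ ^ 2 := by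
      rw [h2, h3]
      simp only [inner_neg_right, inner_sub_left, real_inner_smul_left,
        real_inner_smul_right, real_inner_self_eq_norm_sq, norm_smul,
        Real.norm_eq_abs, mul_pow, sq_abs]
      ring
    rw [e1] at h1
    have h4 : A k ≤ (inner ℝ (q (k+1) - q k) (M k - q k) : ℝ) := by
      nlinarith [hLpos k, hLA k]
    exact h4.trans (real_inner_le_norm _ _)
  -- F13
  have hMA : ∀ k, ‖M k - q k‖ ^ 2 ≤ A k := by
    intro k
    have h1 : ‖M k - q k‖ ≤ ∑ j, ω j * ‖pj j k - q k‖ := by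
      rw [hMq k]
      refine (norm_sum_le _ _).trans_eq ?_
      refine Finset.sum_congr rfl fun j _ => ?_
      rw [norm_smul, Real.norm_eq_abs, abs_of_pos (hωpos j)]
    have h2 : (∑ j, ω j * ‖pj j k - q k‖) ^ 2 ≤ A k := by
      have hcs := Finset.sum_mul_sq_le_sq_mul_sq Finset.univ
        (fun j => Real.sqrt (ω j)) (fun j => Real.sqrt (ω j) * ‖pj j k - q k‖)
      have e1 : ∀ j : Fin np, Real.sqrt (ω j) * (Real.sqrt (ω j) * ‖pj j k - q k‖)
          = ω j * ‖pj j k - q k‖ := fun j => by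
        rw [← mul_assoc, Real.mul_self_sqrt (hωpos j).le]
      have e2 : ∀ j : Fin np, Real.sqrt (ω j) ^ 2 = ω j := fun j =>
        Real.sq_sqrt (hωpos j).le
      have e3 : ∀ j : Fin np, (Real.sqrt (ω j) * ‖pj j k - q k‖) ^ 2
          = ω j * ‖pj j k - q k‖ ^ 2 := fun j => by rw [mul_pow, e2]
      simp_rw [e1, e2, e3, hωsum, one_mul] at hcs
      rw [hAdef k]
      exact hcs
    calc ‖M k - q k‖ ^ 2 ≤ (∑ j, ω j * ‖pj j k - q k‖) ^ 2 :=
          pow_le_pow_left₀ (norm_nonneg _) h1 2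
      _ ≤ A k := h2
  -- F14
  have hAd2 : ∀ k, A k ≤ ‖q (k+1) - q k‖ ^ 2 := by
    intro k
    have h1 := hAδ k
    have h2 := hMA k
    have h3 := hApos k
    have h4 : A k * A k ≤ (‖q (k+1) - q k‖ * ‖M k - q k‖) * (‖q (k+1) - q k‖ * ‖M k - q k‖) :=
      mul_le_mul h1 h1 h3.le (mul_nonneg (norm_nonneg _) (norm_nonneg _))
    nlinarith [sq_nonneg ‖q (k+1) - q k‖, norm_nonneg (q (k+1) - q k), norm_nonneg (M k - q k)]
  have hA0 : Tendsto A atTop (𝓝 0) :=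
    squeeze_zero (fun k => (hApos k).le) hAd2 hδ2
  -- continuity of the φ j
  have hcont : ∀ j, Continuous (φ j) := by
    intro j
    rw [← continuousOn_univ]
    exact (hφ j).continuousOn isOpen_univ
  -- q k lies in a fixed closed ball
  have hqball : ∀ k, q k ∈ Metric.closedBall p₀ (R + 1) := by
    intro k
    rw [Metric.mem_closedBall, dist_comm, dist_eq_norm]
    linarith [hbound k]
  -- bound for φ j on the ball
  obtain ⟨Mb, hMb⟩ : ∃ Mb : Fin np → ℝ,
      ∀ j, ∀ x ∈ Metric.closedBall p₀ (R + 1), |φ j x| ≤ Mb j := by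
    choose Mb hMb using fun j =>
      (isCompact_closedBall p₀ (R + 1)).exists_bound_of_continuousOn (hcont j).continuousOn
    exact ⟨Mb, fun j x hx => by simpa [Real.norm_eq_abs] using hMb j x hx⟩
  -- subgradient norm bound
  have hsb : ∀ j k, η j < φ j (q k) → ‖s j k‖ ≤ 2 * Mb j := by
    intro j k hjk
    have hs0 := hsne j k hjk
    have hsn : (0:ℝ) < ‖s j k‖ := norm_pos_iff.mpr hs0
    have hy : q k + ‖s j k‖⁻¹ • s j k ∈ Metric.closedBall p₀ (R + 1) := by
      rw [Metric.mem_closedBall, dist_eq_norm]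
      have h1 : q k + ‖s j k‖⁻¹ • s j k - p₀ = (q k - p₀) + ‖s j k‖⁻¹ • s j k := by abel
      rw [h1]
      have h2 : ‖‖s j k‖⁻¹ • s j k‖ = 1 := by
        rw [norm_smul, Real.norm_eq_abs, abs_of_pos (inv_pos.mpr hsn), inv_mul_cancel₀ hsn.ne']
      have h3 : ‖q k - p₀‖ ≤ R := by rw [norm_sub_rev]; exact hbound k
      calc ‖(q k - p₀) + ‖s j k‖⁻¹ • s j k‖ ≤ ‖q k - p₀‖ + ‖‖s j k‖⁻¹ • s j k‖ :=
            norm_add_le _ _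
        _ ≤ R + 1 := by rw [h2]; linarith
    have h1 := hs j k (q k + ‖s j k‖⁻¹ • s j k)
    have h2 : (inner ℝ (q k + ‖s j k‖⁻¹ • s j k - q k) (s j k) : ℝ) = ‖s j k‖ := by
      rw [add_sub_cancel_left, real_inner_smul_left, real_inner_self_eq_norm_sq, sq,
        ← mul_assoc, inv_mul_cancel₀ hsn.ne', one_mul]
    rw [h2] at h1
    have h3 := abs_le.mp (hMb j _ hy)
    have h4 := abs_le.mp (hMb j (q k) (by
      have := hqball k; exact this))
    linarith [h3.2, h4.1]
  -- φ j (q k) is controlled by ‖pj j k - q k‖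
  have hMb0 : ∀ j, 0 ≤ Mb j := by
    intro j
    exact le_trans (abs_nonneg _) (hMb j (q 0) (hqball 0))
  have hφbd : ∀ j k, φ j (q k) ≤ η j + (2 * Mb j) * ‖pj j k - q k‖ := by
    intro j k
    by_cases hjk : η j < φ j (q k)
    · have hs0 := hsne j k hjk
      have hsn : (0:ℝ) < ‖s j k‖ := norm_pos_iff.mpr hs0
      have hpn : ‖pj j k - q k‖ = (φ j (q k) - η j) / ‖s j k‖ := by
        rw [hpj j k, if_pos hjk, add_sub_cancel_left, norm_smul, Real.norm_eq_abs,
          abs_of_neg (div_neg_of_neg_of_pos (by linarith) (pow_pos hsn 2))]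
        field_simp
        ring
      have hsb' := hsb j k hjk
      have hd : (0:ℝ) ≤ (φ j (q k) - η j) / ‖s j k‖ := le_of_lt (div_pos (by linarith) hsn)
      have h5 : (φ j (q k) - η j) / ‖s j k‖ * ‖s j k‖ = φ j (q k) - η j :=
        div_mul_cancel₀ _ hsn.ne'
      have h6 := mul_le_mul_of_nonneg_left hsb' hd
      rw [hpn]
      nlinarith
    · push_neg at hjk
      have h1 : (0:ℝ) ≤ (2 * Mb j) * ‖pj j k - q k‖ :=
        mul_nonneg (by linarith [hMb0 j]) (norm_nonneg _)
      linarith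
  -- F15 : pj j k - q k tends to zero
  have hpjlim : ∀ j, Tendsto (fun k => ‖pj j k - q k‖) atTop (𝓝 0) := by
    intro j
    refine my_sqrt_tendsto (fun k => norm_nonneg _) ?_
    have hle : ∀ k, ‖pj j k - q k‖ ^ 2 ≤ (ω j)⁻¹ * A k := by
      intro k
      have h1 : ω j * ‖pj j k - q k‖ ^ 2 ≤ A k := by
        rw [hAdef k]
        exact Finset.single_le_sum (f := fun i => ω i * ‖pj i k - q k‖ ^ 2)
          (fun i _ => mul_nonneg (hωpos i).le (sq_nonneg _)) (Finset.mem_univ j)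
      calc ‖pj j k - q k‖ ^ 2 = (ω j)⁻¹ * (ω j * ‖pj j k - q k‖ ^ 2) := by
            rw [← mul_assoc, inv_mul_cancel₀ (hωpos j).ne', one_mul]
        _ ≤ (ω j)⁻¹ * A k := mul_le_mul_of_nonneg_left h1 (inv_nonneg.mpr (hωpos j).le)
    have h2 : Tendsto (fun k => (ω j)⁻¹ * A k) atTop (𝓝 0) := by
      simpa using hA0.const_mul (ω j)⁻¹
    exact squeeze_zero (fun k => sq_nonneg _) hle h2
  -- C is convex
  have hCconv : Convex ℝ C := by
    rw [hC]
    refine convex_iInter fun j => ?_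
    have h1 := (hφ j).convex_le (η j)
    simpa using h1
  -- cluster point argument
  have hcluster : ∀ σ : ℕ → ℕ, Tendsto σ atTop atTop →
      ∀ x, Tendsto (fun i => q (σ i)) atTop (𝓝 x) → x = PC := by
    intro σ hσ x hx
    have hxC : x ∈ C := by
      rw [hC]
      refine Set.mem_iInter.mpr fun j => ?_
      show φ j x ≤ η j
      have h1 : Tendsto (fun i => φ j (q (σ i))) atTop (𝓝 (φ j x)) :=
        ((hcont j).tendsto x).comp hx
      have h2 : Tendsto (fun i => η j + (2 * Mb j) * ‖pj j (σ i) - q (σ i)‖)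
          atTop (𝓝 (η j)) := by
        have h3 : Tendsto (fun i => ‖pj j (σ i) - q (σ i)‖) atTop (𝓝 0) :=
          (hpjlim j).comp hσ
        have h4 : Tendsto (fun i => η j + (2 * Mb j) * ‖pj j (σ i) - q (σ i)‖)
            atTop (𝓝 (η j + (2 * Mb j) * 0)) :=
          tendsto_const_nhds.add (h3.const_mul (2 * Mb j))
        simpa using h4
      exact le_of_tendsto_of_tendsto' h1 h2 fun i => hφbd j (σ i)
    have hxR : ‖p₀ - x‖ ≤ R := by
      have h1 : Tendsto (fun i => ‖p₀ - q (σ i)‖) atTop (𝓝 ‖p₀ - x‖) :=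
        ((continuous_const.sub continuous_id).norm.tendsto x).comp hx
      exact le_of_tendsto h1 (Eventually.of_forall fun i => hbound (σ i))
    have hRx : R ≤ ‖p₀ - x‖ := hPCmin x hxC
    have hmid : (1/2 : ℝ) • x + (1/2 : ℝ) • PC ∈ C :=
      hCconv hxC hPCmem (by norm_num) (by norm_num) (by norm_num)
    have hger : R ≤ ‖p₀ - ((1/2 : ℝ) • x + (1/2 : ℝ) • PC)‖ := hPCmin _ hmid
    have hpar := parallelogram_law_with_norm ℝ (p₀ - x) (p₀ - PC)
    have he1 : p₀ - ((1/2 : ℝ) • x + (1/2 : ℝ) • PC)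
        = (1/2 : ℝ) • ((p₀ - x) + (p₀ - PC)) := by module
    have he2 : ‖p₀ - ((1/2 : ℝ) • x + (1/2 : ℝ) • PC)‖
        = (1/2 : ℝ) * ‖(p₀ - x) + (p₀ - PC)‖ := by
      rw [he1, norm_smul]; norm_num
    have he3 : (p₀ - x) - (p₀ - PC) = PC - x := by abel
    rw [he3] at hpar
    have hR0 : (0:ℝ) ≤ R := norm_nonneg _
    have hxPC : ‖PC - x‖ ^ 2 ≤ 0 := by
      nlinarith [norm_nonneg ((p₀ - x) + (p₀ - PC)), hger, he2, hxR, hRx]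
    have h0 : PC - x = 0 := by
      have := sq_nonneg ‖PC - x‖
      have h1 : ‖PC - x‖ ^ 2 = 0 := le_antisymm hxPC this
      have h2 : ‖PC - x‖ = 0 := by
        exact pow_eq_zero_iff (by norm_num) |>.mp h1
      exact norm_eq_zero.mp h2
    have := sub_eq_zero.mp h0
    exact this.symm
  -- conclusion via subsequences
  apply Filter.tendsto_of_subseq_tendsto
  intro ns hns
  have hball : ∀ n, q (ns n) ∈ Metric.closedBall p₀ (R + 1) := fun n => hqball (ns n)
  obtain ⟨a, -, ψ, hψmono, hψtend⟩ :=
    tendsto_subseq_of_bounded Metric.isBounded_closedBall hball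
  have hcomp : Tendsto (fun n => ns (ψ n)) atTop atTop := hns.comp hψmono.tendsto_atTop
  have ha : a = PC := hcluster _ hcomp a hψtend
  exact ⟨ψ, ha ▸ hψtend⟩
end
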